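/- arXiv:2507.11596 — 12 statements merged into one kernel-verified Lean document; each statement's English description precedes it below -/
import Mathlib

section
/- Let k ≥ 2 and n ≥ 3 be integers, and set q = q_{n,k} and r = r_{n,k}. Then the coefficient of x^j in 𝓕_{n,k}(x) is zero for every j < r, and the coefficient of x^r in 𝓕_{n,k}(x) equals the binomial coefficient C(q + r, r). In other words, the lowest term of 𝓕_{n,k}(x) is C(q+r, r)·x^r. -/
/-!
Write `n = k(q+1) - r + 1` with `0 ≤ r < k`. Modulo `X^(r+1)` the recurrence keeps only its last
`r + 1` terms `X^(r-j) · 𝓕_{n-k+r-j}`, `j ≤ r`, since the others carry a power `X^(r+1)` or higher.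
For `q = 0` these are `X^r · 𝓕_1 = X^r` and zeros. For `q + 1` they are `X^(r-j) · 𝓕_{k(q+1)-j+1}`,
which by induction on `q` is `C(q+j, j) · X^r` modulo `X^(r+1)`, and the hockey-stick identity
sums these to `C(q+1+r, r) · X^r`.
-/

open Polynomial

theorem Polynomial.coeff_eq_of_X_pow_succ_dvd_sub {R : Type*} [Ring R] {p : R[X]} {r : ℕ}
    {c : R} (h : X ^ (r + 1) ∣ p - C c * X ^ r) : (∀ j < r, p.coeff j = 0) ∧ p.coeff r = c := by
  have hcoeff : ∀ j ≤ r, p.coeff j = (C c * X ^ r).coeff j := fun j hj =>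
    sub_eq_zero.mp (by simpa using X_pow_dvd_iff.mp h j (Nat.lt_succ_of_le hj))
  refine ⟨fun j hj => ?_, ?_⟩
  · simpa [coeff_C_mul_X_pow, hj.ne] using hcoeff j hj.le
  · simpa [coeff_C_mul_X_pow] using hcoeff r le_rfl

theorem Polynomial.X_pow_succ_dvd_sum_sub {R : Type*} [CommRing R] (r : ℕ) (g : ℕ → R[X])
    (c : ℕ → R) (h : ∀ j ≤ r, X ^ (j + 1) ∣ g j - C (c j) * X ^ j) :
    X ^ (r + 1) ∣ ∑ j ∈ Finset.range (r + 1), X ^ (r - j) * g j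
      - C (∑ j ∈ Finset.range (r + 1), c j) * X ^ r := by
  have hsplit : C (∑ j ∈ Finset.range (r + 1), c j) * X ^ r
      = ∑ j ∈ Finset.range (r + 1), X ^ (r - j) * (C (c j) * X ^ j) := by
    rw [map_sum, Finset.sum_mul]
    refine Finset.sum_congr rfl fun j hj => ?_
    rw [mul_left_comm, ← pow_add, Nat.sub_add_cancel (Finset.mem_range_succ_iff.mp hj)]
  rw [hsplit, ← Finset.sum_sub_distrib]
  refine Finset.dvd_sum fun j hj => ?_
  have hjr := Finset.mem_range_succ_iff.mp hj
  rw [← mul_sub, show r + 1 = (r - j) + (j + 1) by omega, pow_add]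
  exact mul_dvd_mul_left _ (h j hjr)

theorem Nat.add_pred_mul_mod_self {k M : ℕ} (hk : 0 < k) (hM : 0 < M) :
    M + (k - 1) * M % k = k * ((M - 1) / k + 1) := by
  obtain ⟨q, t, ht, rfl⟩ : ∃ q t, t < k ∧ M = k * q + t + 1 :=
    ⟨(M - 1) / k, (M - 1) % k, Nat.mod_lt _ hk, by have := Nat.div_add_mod (M - 1) k; omega⟩
  have hmul : (k - 1) * (k * q + t + 1) = k * ((k - 1) * q + t) + (k - 1 - t) := by
    zify [(by omega : 1 ≤ k), (by omega : t ≤ k - 1)]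
    ring
  rw [hmul, Nat.mul_add_mod, Nat.mod_eq_of_lt (by omega), Nat.add_sub_cancel,
    Nat.mul_add_div hk, Nat.div_eq_of_lt ht, add_zero, Nat.mul_succ]
  omega

section FibonacciPolynomial

variable {k : ℕ} {F : ℤ → ℤ[X]}

theorem X_pow_succ_dvd_sub_sum_of_rec
    (hrec : ∀ n : ℤ, F n = ∑ i ∈ Finset.range k, X ^ (k - 1 - i) * F (n - 1 - (i : ℤ)))
    {r : ℕ} (hr : r < k) (n : ℤ) :
    X ^ (r + 1) ∣ F n - ∑ j ∈ Finset.range (r + 1), X ^ (r - j) * F (n - k + r - j) := by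
  obtain ⟨a, rfl⟩ : ∃ a, k = a + (r + 1) := ⟨k - (r + 1), by omega⟩
  have htail : ∑ j ∈ Finset.range (r + 1), X ^ (a + (r + 1) - 1 - (a + j)) *
        F (n - 1 - ((a + j : ℕ) : ℤ))
      = ∑ j ∈ Finset.range (r + 1), X ^ (r - j) * F (n - ((a + (r + 1) : ℕ) : ℤ) + r - j) := by
    refine Finset.sum_congr rfl fun j _ => ?_
    rw [show a + (r + 1) - 1 - (a + j) = r - j by omega]
    push_cast
    ring_nf
  rw [hrec n, Finset.sum_range_add, htail, add_sub_cancel_right]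
  exact Finset.dvd_sum fun i hi =>
    (pow_dvd_pow X (by rw [Finset.mem_range] at hi; omega)).mul_right _

theorem X_pow_succ_dvd_fib_sub_X_pow
    (hrec : ∀ n : ℤ, F n = ∑ i ∈ Finset.range k, X ^ (k - 1 - i) * F (n - 1 - (i : ℤ)))
    (hF1 : F 1 = 1) (hF0 : ∀ m : ℕ, m ≤ k - 2 → F (-(m : ℤ)) = 0) {r : ℕ} (hr : r < k) :
    X ^ (r + 1) ∣ F (k - r + 1) - X ^ r := by
  have hinit : ∑ j ∈ Finset.range (r + 1), X ^ (r - j) * F ((k : ℤ) - r + 1 - k + r - j)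
      = X ^ r := by
    rw [Finset.sum_range_succ', Finset.sum_eq_zero fun j hj => ?_]
    · simp [show (k : ℤ) - r + 1 - k + r = 1 by ring, hF1]
    · rw [show (k : ℤ) - r + 1 - k + r - (j + 1 : ℕ) = -(j : ℤ) by push_cast; ring,
        hF0 j (by rw [Finset.mem_range] at hj; omega), mul_zero]
  simpa [hinit] using X_pow_succ_dvd_sub_sum_of_rec hrec hr (k - r + 1)

theorem X_pow_succ_dvd_fib_sub_choose
    (hrec : ∀ n : ℤ, F n = ∑ i ∈ Finset.range k, X ^ (k - 1 - i) * F (n - 1 - (i : ℤ)))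
    (hF1 : F 1 = 1) (hF0 : ∀ m : ℕ, m ≤ k - 2 → F (-(m : ℤ)) = 0) (q : ℕ) {r : ℕ} (hr : r < k) :
    X ^ (r + 1) ∣ F (k * (q + 1) - r + 1) - C ((q + r).choose r : ℤ) * X ^ r := by
  induction q generalizing r with
  | zero => simpa using X_pow_succ_dvd_fib_sub_X_pow hrec hF1 hF0 hr
  | succ q ih =>
    have hhockey : ∑ j ∈ Finset.range (r + 1), ((q + j).choose j : ℤ) = (q + 1 + r).choose r := by
      have hsymm : ∀ j, (q + j).choose j = (j + q).choose q := fun j => by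
        rw [← Nat.choose_symm_add, add_comm]
      rw [← Nat.cast_sum, Finset.sum_congr rfl fun j _ => hsymm j, Nat.sum_range_add_choose,
        ← Nat.choose_symm_add, add_comm r, add_right_comm]
    have hshift : ∀ j : ℕ, (k : ℤ) * (q + 1 + 1) - r + 1 - k + r - j = k * (q + 1) - j + 1 :=
      fun j => by ring
    have htail := X_pow_succ_dvd_sub_sum_of_rec hrec hr (k * (q + 1 + 1) - r + 1)
    simp only [hshift] at htail
    have hsum := X_pow_succ_dvd_sum_sub r (fun j => F (k * (q + 1) - j + 1))
      (fun j => ((q + j).choose j : ℤ)) fun j hj => ih (by omega)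
    rw [hhockey] at hsum
    push_cast
    simpa using dvd_add htail hsum

end FibonacciPolynomial

/-- For `n ≥ 3`, with `q = ⌊(n-2)/k⌋` and `r = ((k-1)(n-1)) mod k`,
the lowest term of the `k`-generalized Fibonacci polynomial `F n` is `C(q+r, r) · x^r`. -/
theorem fib_poly_lowest_term_pos (k : ℕ) (hk : 2 ≤ k)
    (F : ℤ → Polynomial ℤ)
    (hrec : ∀ n : ℤ, F n = ∑ i ∈ Finset.range k, X ^ (k - 1 - i) * F (n - 1 - (i : ℤ)))
    (hF1 : F 1 = 1)
    (hF0 : ∀ m : ℕ, m ≤ k - 2 → F (-(m : ℤ)) = 0)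
    (n : ℤ) (hn : 3 ≤ n) (q r : ℕ)
    (hq : q = (n - 2).toNat / k)
    (hr : r = ((k - 1) * (n - 1).toNat) % k) :
    (∀ j : ℕ, j < r → (F n).coeff j = 0) ∧
    (F n).coeff r = ((q + r).choose r : ℤ) := by
  have hq' : q = ((n - 1).toNat - 1) / k := by rw [hq]; congr 1; omega
  have hindex : n = k * (q + 1) - r + 1 := by
    have h := Nat.add_pred_mul_mod_self (by omega : 0 < k) (by omega : 0 < (n - 1).toNat)
    rw [← hr, ← hq'] at h
    have h' : ((n - 1).toNat : ℤ) + r = k * (q + 1) := by exact_mod_cast h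
    rw [Int.toNat_of_nonneg (by omega)] at h'
    linarith
  have hrk : r < k := hr ▸ Nat.mod_lt _ (by omega)
  rw [hindex]
  exact coeff_eq_of_X_pow_succ_dvd_sub (X_pow_succ_dvd_fib_sub_choose hrec hF1 hF0 q hrk)
end

section
/- Let k ≥ 2 be an integer and let n ≤ 0 be an integer. The k-generalized Fibonacci polynomial 𝓕_{n,k} is the zero polynomial if and only if q_{n,k} < r_{n,k}. -/
/-!
Put `B N = F (1 - N)`, so that `F n = B (|n| + 1)`. Subtracting the recurrence at `n - 1` from `X`
times the recurrence at `n` collapses the sums to the three-term recurrence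
`B (N + k + 1) = (1 + X ^ k) B (N + 1) - X B N`, with `B 0 = 1` and `B 1 = ⋯ = B (k - 1) = 0`.
Writing `N = k q + r`, one step of it raises `q` by one and only involves `(q, r)` and `(q, r - 1)`.
Induction on `q` then shows that `B (k q + r)` vanishes when `q < r`, and that otherwise its
lowest-order term is `(q.choose r) (-X) ^ r` (by Pascal's rule), which is nonzero.
-/

open Polynomial

namespace KFib

variable {R : Type*} [CommRing R] {k : ℕ}

theorem backward_recurrence {F : ℤ → R[X]}
    (hrec : ∀ n : ℤ, F n = ∑ i ∈ Finset.range k, X ^ (k - 1 - i) * F (n - 1 - (i : ℤ)))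
    (n : ℤ) : F (n - k - 1) = (1 + X ^ k) * F (n - 1) - X * F n := by
  cases k with
  | zero =>
    have hF : ∀ n, F n = 0 := fun n => by simpa using hrec n
    simp [hF]
  | succ k =>
    have hXF : X * F n = ∑ i ∈ Finset.range k, X ^ (k - i) * F (n - 1 - 1 - i)
        + X ^ (k + 1) * F (n - 1) := by
      rw [hrec n, Finset.mul_sum, Finset.sum_range_succ']
      congr 1
      · refine Finset.sum_congr rfl fun i hi => ?_
        rw [Finset.mem_range] at hi
        rw [← mul_assoc, ← pow_succ', show k + 1 - 1 - (i + 1) + 1 = k - i by omega]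
        push_cast; ring_nf
      · simp [pow_succ', mul_assoc]
    have hF : F (n - 1) = ∑ i ∈ Finset.range k, X ^ (k - i) * F (n - 1 - 1 - i)
        + F (n - (k + 1 : ℕ) - 1) := by
      rw [hrec (n - 1), Finset.sum_range_succ, Nat.add_sub_cancel, Nat.sub_self, pow_zero, one_mul]
      congr 2
      push_cast; ring
    linear_combination hXF - hF

variable {B : ℤ → R[X]}

theorem eq_zero_of_lt (hB : ∀ N : ℤ, B (N + k + 1) = (1 + X ^ k) * B (N + 1) - X * B N)
    (hlow : ∀ j : ℕ, 0 < j → j < k → B j = 0) {q r : ℕ} (hrk : r < k) (hqr : q < r) :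
    B (k * q + r) = 0 := by
  induction q generalizing r with
  | zero => simpa using hlow r hqr hrk
  | succ q ih =>
    obtain ⟨s, rfl⟩ : ∃ s, r = s + 1 := ⟨r - 1, by omega⟩
    have hstep := hB (k * q + s)
    rw [show (k * q + s : ℤ) + k + 1 = k * (q + 1 : ℕ) + (s + 1 : ℕ) by push_cast; ring,
      show (k * q + s : ℤ) + 1 = k * q + (s + 1 : ℕ) by push_cast; ring] at hstep
    rw [hstep, ih (by omega) (by omega), ih (by omega) (by omega), mul_zero, mul_zero, sub_zero]

theorem X_pow_dvd_sub_choose_mul (hB : ∀ N : ℤ, B (N + k + 1) = (1 + X ^ k) * B (N + 1) - X * B N)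
    (h0 : B 0 = 1) (hlow : ∀ j : ℕ, 0 < j → j < k → B j = 0) {q r : ℕ} (hrk : r < k) :
    X ^ (r + 1) ∣ B (k * q + r) - (q.choose r : R[X]) * (-X) ^ r := by
  have hXk : (X : R[X]) ^ k = X * X ^ (k - 1) := by rw [← pow_succ', Nat.sub_add_cancel (by omega)]
  induction q generalizing r with
  | zero =>
    rcases Nat.eq_zero_or_pos r with rfl | hr
    · simp [h0]
    · simp [hlow r hr hrk, Nat.choose_eq_zero_of_lt hr]
  | succ q ih =>
    rcases r with _ | s
    · -- `B` is indexed by `ℤ`, so this step also covers `q = 0`, through `B (-1)`.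
      have hstep := hB (k * q - 1)
      rw [show (k * q - 1 : ℤ) + k + 1 = k * (q + 1 : ℕ) + (0 : ℕ) by push_cast; ring,
        show (k * q - 1 : ℤ) + 1 = k * q + (0 : ℕ) by push_cast; ring] at hstep
      obtain ⟨P, hP⟩ := ih (r := 0) hrk
      rw [hstep]
      refine ⟨X ^ (k - 1) + (1 + X ^ k) * P - B (k * q - 1), ?_⟩
      simp only [Nat.choose_zero_right, Nat.cast_one, pow_zero, one_mul, zero_add, pow_one] at hP ⊢
      linear_combination (1 + X ^ k) * hP + hXk
    · have hstep := hB (k * q + s)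
      rw [show (k * q + s : ℤ) + k + 1 = k * (q + 1 : ℕ) + (s + 1 : ℕ) by push_cast; ring,
        show (k * q + s : ℤ) + 1 = k * q + (s + 1 : ℕ) by push_cast; ring] at hstep
      obtain ⟨P, hP⟩ := ih (r := s + 1) hrk
      obtain ⟨Q, hQ⟩ := ih (r := s) (by omega)
      rw [hstep]
      refine ⟨(1 + X ^ k) * P - Q + (-1) ^ (s + 1) * (q.choose (s + 1) : R[X]) * X ^ (k - 1), ?_⟩
      rw [Nat.choose_succ_succ', Nat.cast_add (q.choose s)]
      rw [neg_pow] at hP hQ ⊢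
      linear_combination (1 + X ^ k) * hP - X * hQ
        + (-1) ^ (s + 1) * (q.choose (s + 1) : R[X]) * X ^ (s + 1) * hXk

theorem ne_zero_of_le [CharZero R]
    (hB : ∀ N : ℤ, B (N + k + 1) = (1 + X ^ k) * B (N + 1) - X * B N)
    (h0 : B 0 = 1) (hlow : ∀ j : ℕ, 0 < j → j < k → B j = 0) {q r : ℕ} (hrk : r < k)
    (hrq : r ≤ q) : B (k * q + r) ≠ 0 := by
  intro hzero
  have hcoeff :=
    X_pow_dvd_iff.mp (X_pow_dvd_sub_choose_mul (q := q) hB h0 hlow hrk) r r.lt_succ_self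
  rw [hzero, zero_sub, coeff_neg, neg_eq_zero, neg_pow, ← mul_assoc, coeff_mul_X_pow',
    if_pos le_rfl, Nat.sub_self, coeff_zero_eq_eval_zero] at hcoeff
  exact (Nat.choose_pos hrq).ne' (by simpa using hcoeff)

end KFib

/-- For `n ≤ 0`, with `q = ⌊(|n|+1)/k⌋` and `r = (|n|+1) mod k`,
the `k`-generalized Fibonacci polynomial `F n` is the zero polynomial iff `q < r`. -/
theorem fib_poly_vanishes_iff (k : ℕ) (hk : 2 ≤ k)
    (F : ℤ → Polynomial ℤ)
    (hrec : ∀ n : ℤ, F n = ∑ i ∈ Finset.range k, X ^ (k - 1 - i) * F (n - 1 - (i : ℤ)))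
    (hF1 : F 1 = 1)
    (hF0 : ∀ m : ℕ, m ≤ k - 2 → F (-(m : ℤ)) = 0)
    (n : ℤ) (hn : n ≤ 0) (q r : ℕ)
    (hq : q = ((-n).toNat + 1) / k)
    (hr : r = ((-n).toNat + 1) % k) :
    F n = 0 ↔ q < r := by
  let B : ℤ → Polynomial ℤ := fun N => F (1 - N)
  have hB : ∀ N : ℤ, B (N + k + 1) = (1 + X ^ k) * B (N + 1) - X * B N := fun N => by
    simpa [B, sub_sub] using KFib.backward_recurrence hrec (1 - N)
  have h0 : B 0 = 1 := by simpa [B] using hF1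
  have hlow : ∀ j : ℕ, 0 < j → j < k → B j = 0 := fun j hj hjk => by
    show F (1 - j) = 0
    rw [show (1 : ℤ) - j = -((j - 1 : ℕ) : ℤ) by omega]
    exact hF0 (j - 1) (by omega)
  have hn' : n = 1 - (k * q + r) := by
    have := Nat.div_add_mod ((-n).toNat + 1) k
    rw [← hq, ← hr] at this
    omega
  have hrk : r < k := hr ▸ Nat.mod_lt _ (by omega)
  rw [hn']
  exact ⟨fun h => not_le.mp fun hrq => KFib.ne_zero_of_le hB h0 hlow hrk hrq h,
    KFib.eq_zero_of_lt hB hlow hrk⟩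
end

section
/- Let k ≥ 2 be an integer. The set of integers n ≤ 0 for which the k-generalized Fibonacci polynomial 𝓕_{n,k} is the zero polynomial is finite and has exactly k(k−1)/2 elements. Moreover, every such n satisfies |n| < k² − k − 1, i.e. 𝓕_{n,k} ≠ 0 whenever n ≤ 0 and |n| ≥ k² − k − 1. -/
/-!
Read backwards, the recurrence says that the generating series `∑_N 𝓕_{1-k-N} z^N` is the inverse
of `∑_{j<k} (X z)^j - z^k`, that is `(1 - X z) / (1 - z^k (1 + X^k - X z))`. Expanding the
geometric series, the coefficient of `z^(k j + t)` (`t < k`) in `1 / (1 - z^k (1 + X^k - X z))`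
vanishes when `t > j`, while its coefficient of `X^t` is `(-1)^t C(j, t)`, contributed by the single
summand `z^(k j) (1 + X^k - X z)^j`. With Pascal's rule this shows that, for `r < k`,
`𝓕_{-(k i + r)} = 0` exactly when `i ≤ r ≤ k - 2`. There are `∑_{r ≤ k-2} (r + 1) = k(k-1)/2` such
indices, all of absolute value at most `(k + 1)(k - 2) = k² - k - 2`.
-/

open Polynomial Finset

namespace PowerSeries

variable {R : Type*} [CommRing R]

theorem coeff_C_add_C_mul_X_pow (a b : R) (r d : ℕ) :
    coeff d ((C b + C a * X) ^ r) = r.choose d * a ^ d * b ^ (r - d) := by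
  have hterm (m : ℕ) : (C a * X) ^ m * C b ^ (r - m) * (r.choose m : R⟦X⟧)
      = C (r.choose m * a ^ m * b ^ (r - m)) * X ^ m := by
    simp only [map_mul, map_pow, map_natCast]; ring
  simp_rw [add_comm (C b), add_pow, hterm, map_sum, coeff_C_mul_X_pow, sum_ite_eq, mem_range]
  split_ifs with hd
  · rfl
  · simp [Nat.choose_eq_zero_of_lt (by omega : r < d)]

theorem coeff_eq_sum_of_mul_one_sub_X_pow_mul {k : ℕ} (hk : 0 < k) {U V : R⟦X⟧}
    (hV : V * (1 - X ^ k * U) = 1) (N : ℕ) :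
    coeff N V = ∑ r ∈ range (N + 1), if k * r ≤ N then coeff (N - k * r) (U ^ r) else 0 := by
  have hgeom : V = ∑ r ∈ range (N + 1), (X ^ k * U) ^ r + V * (X ^ k * U) ^ (N + 1) := by
    linear_combination
      V * geom_sum_mul (X ^ k * U) (N + 1) + (∑ r ∈ range (N + 1), (X ^ k * U) ^ r) * hV
  have hpow (r : ℕ) : (X ^ k * U) ^ r = U ^ r * X ^ (k * r) := by ring
  have htail : coeff N (V * (X ^ k * U) ^ (N + 1)) = 0 := by
    rw [hpow, ← mul_assoc, coeff_mul_X_pow', if_neg]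
    nlinarith
  rw [hgeom, map_add, htail, add_zero, map_sum]
  simp_rw [hpow, coeff_mul_X_pow']

end PowerSeries

namespace Polynomial

variable {R : Type*} [CommRing R]

theorem coeff_natCast_mul_neg_X_pow_mul (c d t : ℕ) (q : R[X]) :
    ((c : R[X]) * (-X) ^ d * q).coeff t =
      if d ≤ t then c * (-1) ^ d * q.coeff (t - d) else 0 := by
  rw [show (c : R[X]) * (-X) ^ d * q = C ((c : R) * (-1) ^ d) * (X ^ d * q) by simp; ring,
    coeff_C_mul, coeff_X_pow_mul']
  split_ifs <;> simp

end Polynomial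

namespace FibPoly

noncomputable def stepSeries (k : ℕ) : PowerSeries ℤ[X] :=
  PowerSeries.C (1 + X ^ k) + PowerSeries.C (-X) * PowerSeries.X

noncomputable def invSeries (k : ℕ) : PowerSeries ℤ[X] :=
  PowerSeries.invOfUnit (1 - PowerSeries.X ^ k * stepSeries k) 1

noncomputable def charSeries (k : ℕ) : PowerSeries ℤ[X] :=
  ∑ j ∈ range k, (PowerSeries.C X * PowerSeries.X) ^ j - PowerSeries.X ^ k

variable {k : ℕ}

theorem invSeries_mul (hk : 0 < k) : invSeries k * (1 - PowerSeries.X ^ k * stepSeries k) = 1 := by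
  rw [mul_comm, invSeries, PowerSeries.mul_invOfUnit]
  simp [zero_pow hk.ne']

theorem charSeries_mul_one_sub :
    charSeries k * (1 - PowerSeries.C X * PowerSeries.X) =
      1 - PowerSeries.X ^ k * stepSeries k := by
  have h := geom_sum_mul (PowerSeries.C (X : ℤ[X]) * PowerSeries.X) k
  simp only [charSeries, stepSeries, map_add, map_one, map_pow, map_neg]
  linear_combination -h

theorem coeff_invSeries (hk : 0 < k) (N : ℕ) :
    PowerSeries.coeff N (invSeries k) = ∑ r ∈ range (N + 1), if k * r ≤ N then
      (r.choose (N - k * r) : ℤ[X]) * (-X) ^ (N - k * r) * (1 + X ^ k) ^ (r - (N - k * r))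
      else 0 := by
  simp_rw [PowerSeries.coeff_eq_sum_of_mul_one_sub_X_pow_mul hk (invSeries_mul hk), stepSeries,
    PowerSeries.coeff_C_add_C_mul_X_pow]

theorem coeff_invSeries_eq_zero {j t : ℕ} (htk : t < k) (hjt : j < t) :
    PowerSeries.coeff (k * j + t) (invSeries k) = 0 := by
  rw [coeff_invSeries (by omega)]
  refine sum_eq_zero fun r _ ↦ ?_
  split_ifs with hr
  · have hrj : r ≤ j := by nlinarith
    have := Nat.mul_le_mul_left k hrj
    rw [Nat.choose_eq_zero_of_lt (by omega), Nat.cast_zero, zero_mul, zero_mul]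
  · rfl

theorem coeff_coeff_invSeries {j t : ℕ} (htk : t < k) :
    (PowerSeries.coeff (k * j + t) (invSeries k)).coeff t = (-1) ^ t * j.choose t := by
  have hconst (e : ℕ) : ((1 + X ^ k : ℤ[X]) ^ e).coeff 0 = 1 := by
    simp [coeff_zero_eq_eval_zero, zero_pow (by omega : k ≠ 0)]
  rw [coeff_invSeries (by omega), finsetSum_coeff, sum_eq_single_of_mem j (by simp; nlinarith)]
  · simp [coeff_natCast_mul_neg_X_pow_mul, hconst]
    ring
  · intro r _ hrj
    split_ifs with hr
    · rw [coeff_natCast_mul_neg_X_pow_mul, if_neg]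
      have hrj' : r < j := lt_of_le_of_ne (by nlinarith) hrj
      have : k * r + k ≤ k * j := by nlinarith
      omega
    · rfl

theorem coeff_sub_X_mul_coeff_invSeries {j t : ℕ} (htk : t + 1 < k) :
    (PowerSeries.coeff (k * j + (t + 1)) (invSeries k)
      - X * PowerSeries.coeff (k * j + t) (invSeries k)).coeff (t + 1)
      = (-1) ^ (t + 1) * ((j + 1).choose (t + 1) : ℤ) := by
  rw [coeff_sub, coeff_X_mul, coeff_coeff_invSeries htk, coeff_coeff_invSeries (by omega),
    Nat.choose_succ_succ', pow_succ]
  push_cast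
  ring

theorem coeff_coeff_invSeries_zero (hk : 0 < k) (j : ℕ) :
    (PowerSeries.coeff (k * j) (invSeries k)).coeff 0 = 1 := by
  simpa using coeff_coeff_invSeries (j := j) hk

def zeroIndices (k : ℕ) : Finset ℤ :=
  ((range (k - 1)).sigma fun r ↦ range (r + 1)).image fun p ↦ -((k * p.2 + p.1 : ℕ) : ℤ)

theorem mem_zeroIndices {n : ℤ} :
    n ∈ zeroIndices k ↔
      ∃ i r : ℕ, i ≤ r ∧ r + 2 ≤ k ∧ -((k * i + r : ℕ) : ℤ) = n := by
  simp only [zeroIndices, mem_image, mem_sigma, mem_range, Sigma.exists]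
  constructor
  · rintro ⟨r, i, ⟨hr, hi⟩, rfl⟩
    exact ⟨i, r, by omega, by omega, rfl⟩
  · rintro ⟨i, r, hi, hr, rfl⟩
    exact ⟨r, i, ⟨by omega, by omega⟩, rfl⟩

theorem card_zeroIndices : (zeroIndices k).card = k * (k - 1) / 2 := by
  rw [zeroIndices, card_image_of_injOn, card_sigma]
  · rcases k with _ | k
    · rfl
    · simpa [sum_range_succ'] using sum_range_id (k + 1)
  · rintro ⟨r, i⟩ h ⟨r', i'⟩ h' heq
    simp only [coe_sigma, Set.mem_sigma_iff, coe_range, Set.mem_Iio] at h h'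
    simp only [neg_inj, Nat.cast_inj] at heq
    have hdiv := congrArg (· / k) heq
    have hmod := congrArg (· % k) heq
    have hr : r < k := by omega
    have hr' : r' < k := by omega
    simp only [Nat.mul_add_div (show 0 < k by omega), Nat.div_eq_of_lt hr, Nat.div_eq_of_lt hr',
      Nat.mul_add_mod, Nat.mod_eq_of_lt hr, Nat.mod_eq_of_lt hr', add_zero] at hdiv hmod
    subst hdiv hmod
    rfl

theorem abs_lt_of_mem_zeroIndices {n : ℤ} (hn : n ∈ zeroIndices k) : |n| < k ^ 2 - k - 1 := by
  obtain ⟨i, r, hir, hrk, rfl⟩ := mem_zeroIndices.1 hn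
  rw [abs_neg, Nat.abs_cast]
  push_cast
  nlinarith

noncomputable def genSeries (k : ℕ) (F : ℤ → ℤ[X]) : PowerSeries ℤ[X] :=
  PowerSeries.mk fun N ↦ F (1 - k - N)

@[simp]
theorem coeff_genSeries (k N : ℕ) (F : ℤ → ℤ[X]) :
    PowerSeries.coeff N (genSeries k F) = F (1 - k - N) :=
  PowerSeries.coeff_mk _ _

structure IsGenFibPoly (k : ℕ) (F : ℤ → ℤ[X]) : Prop where
  recurrence : ∀ n : ℤ, F n = ∑ i ∈ range k, X ^ (k - 1 - i) * F (n - 1 - (i : ℤ))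
  at_one : F 1 = 1
  initial : ∀ m : ℕ, m ≤ k - 2 → F (-(m : ℤ)) = 0

namespace IsGenFibPoly

variable {F : ℤ → ℤ[X]}

theorem eq_zero_of_mem_Icc (hF : IsGenFibPoly k F) {n : ℤ} (h₁ : 2 - (k : ℤ) ≤ n)
    (h₂ : n ≤ 0) : F n = 0 := by
  simpa [Int.toNat_of_nonneg (neg_nonneg.2 h₂)] using hF.initial (-n).toNat (by omega)

theorem eq_sum_X_pow_mul (hF : IsGenFibPoly k F) (n : ℤ) :
    F n = ∑ j ∈ range k, X ^ j * F (n - k + j) := by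
  rw [hF.recurrence, ← sum_range_reflect]
  refine sum_congr rfl fun j hj => ?_
  rw [mem_range] at hj
  rw [show k - 1 - (k - 1 - j) = j by omega]
  congr 2
  push_cast [Nat.cast_sub (by omega : j ≤ k - 1), Nat.cast_sub (by omega : 1 ≤ k)]
  ring

theorem genSeries_mul_charSeries (hF : IsGenFibPoly k F) (hk : 0 < k) :
    genSeries k F * charSeries k = 1 := by
  ext M
  -- The summands with `j > M` are initial zeros, so the sum is the recurrence at `1 - M`.
  have hterm (j : ℕ) (hj : j < k) : PowerSeries.coeff M
      (genSeries k F * (PowerSeries.C X * PowerSeries.X) ^ j)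
      = X ^ j * F (1 - M - k + j) := by
    rw [mul_pow, ← map_pow, mul_left_comm, PowerSeries.coeff_C_mul, ← mul_comm,
      PowerSeries.coeff_mul_X_pow']
    split_ifs with hjM
    · rw [coeff_genSeries, mul_comm, Nat.cast_sub hjM]
      congr 2
      ring
    · rw [hF.eq_zero_of_mem_Icc (by omega) (by omega), mul_zero, zero_mul]
  rw [charSeries, mul_sub, mul_sum, map_sub, map_sum,
    sum_congr rfl fun j hj ↦ hterm j (mem_range.1 hj), ← hF.eq_sum_X_pow_mul,
    PowerSeries.coeff_mul_X_pow', PowerSeries.coeff_one]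
  split_ifs with hkM hM hM
  · omega
  · simp [Nat.cast_sub hkM]
  · simp [hM, hF.at_one]
  · simp [hF.eq_zero_of_mem_Icc (n := 1 - M) (by omega) (by omega)]

theorem genSeries_eq_mul_invSeries (hF : IsGenFibPoly k F) (hk : 0 < k) :
    genSeries k F = (1 - PowerSeries.C X * PowerSeries.X) * invSeries k := by
  calc genSeries k F
      = genSeries k F * (1 - PowerSeries.X ^ k * stepSeries k) * invSeries k := by
        rw [mul_assoc, mul_comm _ (invSeries k), invSeries_mul hk, mul_one]
    _ = (1 - PowerSeries.C X * PowerSeries.X) * invSeries k := by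
        rw [← charSeries_mul_one_sub, ← mul_assoc, hF.genSeries_mul_charSeries hk, one_mul]

theorem one_sub_eq_one (hF : IsGenFibPoly k F) (hk : 0 < k) : F (1 - k) = 1 := by
  have h := congrArg (PowerSeries.coeff 0) (hF.genSeries_eq_mul_invSeries hk)
  rw [coeff_genSeries, PowerSeries.coeff_zero_eq_constantCoeff_apply, map_mul, invSeries,
    PowerSeries.constantCoeff_invOfUnit] at h
  simpa using h

theorem neg_mul_succ_add_eq (hF : IsGenFibPoly k F) (hk : 0 < k) (j r : ℕ) :
    F (-((k * (j + 1) + r : ℕ) : ℤ)) = PowerSeries.coeff (k * j + (r + 1)) (invSeries k)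
      - X * PowerSeries.coeff (k * j + r) (invSeries k) := by
  have h := congrArg (PowerSeries.coeff (k * j + r + 1)) (hF.genSeries_eq_mul_invSeries hk)
  rw [coeff_genSeries, sub_mul, one_mul, map_sub, mul_assoc, PowerSeries.coeff_C_mul,
    PowerSeries.coeff_succ_X_mul] at h
  rw [← add_assoc]
  convert h using 2
  push_cast
  ring

theorem apply_neg_eq_zero_iff (hF : IsGenFibPoly k F) {i r : ℕ} (hr : r < k) :
    F (-((k * i + r : ℕ) : ℤ)) = 0 ↔ i ≤ r ∧ r + 2 ≤ k := by
  rcases i with _ | j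
  · by_cases hrk : r + 2 ≤ k
    · simpa [hrk] using hF.initial r (by omega)
    · rw [show (-((k * 0 + r : ℕ) : ℤ)) = 1 - k by omega, hF.one_sub_eq_one (by omega)]
      simp [hrk]
  rw [hF.neg_mul_succ_add_eq (by omega)]
  by_cases hrk : r + 2 ≤ k
  · by_cases hjr : j < r
    · simp [coeff_invSeries_eq_zero (k := k) (by omega) hjr,
        coeff_invSeries_eq_zero (k := k) (j := j) (t := r + 1) (by omega) (by omega), hrk]
      omega
    · refine iff_of_false (fun h ↦ ?_) (by omega)
      have hcoeff := coeff_sub_X_mul_coeff_invSeries (k := k) (j := j) (t := r) (by omega)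
      rw [h, coeff_zero] at hcoeff
      exact mul_ne_zero (pow_ne_zero _ (by norm_num))
        (Nat.cast_ne_zero.2 (Nat.choose_pos (by omega)).ne') hcoeff.symm
  · refine iff_of_false (fun h ↦ ?_) (by omega)
    have hcoeff := congrArg (coeff · 0) h
    rw [show k * j + (r + 1) = k * (j + 1) by rw [show r + 1 = k by omega, mul_add_one]] at hcoeff
    simp [coeff_coeff_invSeries_zero (k := k) (by omega)] at hcoeff

theorem setOf_eq_zeroIndices (hF : IsGenFibPoly k F) (hk : 2 ≤ k) :
    {n : ℤ | n ≤ 0 ∧ F n = 0} = zeroIndices k := by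
  ext n
  simp only [Set.mem_ofPred_eq, mem_coe, mem_zeroIndices]
  constructor
  · rintro ⟨hn, hFn⟩
    obtain ⟨m, rfl⟩ : ∃ m : ℕ, -(m : ℤ) = n := ⟨(-n).toNat, by omega⟩
    rw [← Nat.div_add_mod m k, hF.apply_neg_eq_zero_iff (Nat.mod_lt m (by omega))] at hFn
    exact ⟨m / k, m % k, hFn.1, hFn.2, by rw [Nat.div_add_mod]⟩
  · rintro ⟨i, r, hir, hrk, rfl⟩
    exact ⟨by omega, (hF.apply_neg_eq_zero_iff (by omega)).2 ⟨hir, hrk⟩⟩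

end IsGenFibPoly

end FibPoly

/-- The set of nonpositive indices at which the `k`-generalized Fibonacci
polynomial vanishes identically is finite with exactly `k(k-1)/2` elements, and every
such index `n` satisfies `|n| < k² - k - 1`. -/
theorem fib_poly_vanishing_set_card (k : ℕ) (hk : 2 ≤ k)
    (F : ℤ → Polynomial ℤ)
    (hrec : ∀ n : ℤ, F n = ∑ i ∈ Finset.range k, X ^ (k - 1 - i) * F (n - 1 - (i : ℤ)))
    (hF1 : F 1 = 1)
    (hF0 : ∀ m : ℕ, m ≤ k - 2 → F (-(m : ℤ)) = 0) :
    {n : ℤ | n ≤ 0 ∧ F n = 0}.Finite ∧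
    {n : ℤ | n ≤ 0 ∧ F n = 0}.ncard = k * (k - 1) / 2 ∧
    ∀ n : ℤ, n ≤ 0 → (k : ℤ) ^ 2 - k - 1 ≤ |n| → F n ≠ 0 := by
  have hzero := FibPoly.IsGenFibPoly.setOf_eq_zeroIndices ⟨hrec, hF1, hF0⟩ hk
  refine ⟨hzero ▸ finite_toSet _, by rw [hzero, Set.ncard_coe_finset, FibPoly.card_zeroIndices],
    fun n hn hbound hFn ↦ ?_⟩
  have hmem : n ∈ (FibPoly.zeroIndices k : Set ℤ) := hzero ▸ ⟨hn, hFn⟩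
  exact (FibPoly.abs_lt_of_mem_zeroIndices hmem).not_ge hbound
end

section
/- Let k ≥ 2 be an integer and let n ≤ 0 be such that there exists an integer s with 0 ≤ s ≤ k−2 and s(k+1) ≤ |n| ≤ (s+1)k − 2. Then the k-generalized Fibonacci polynomial 𝓕_{n,k} is the zero polynomial; and conversely, if 𝓕_{n,k} = 0 for some n ≤ 0, then |n| lies in one of these intervals. -/
open Polynomial Finset

/-!
Put `G N = 𝓕_{1-N,k}` (`fibReflected k N`). Read backwards, the recurrence says that
`∑ G N t^N` times `∑_{j<k} (Xt)^j - t^k` is `∑_{j<k} (Xt)^j`; multiplying by `1 - Xt`, the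
generating function of `G` is `(1 - X^k t^k) / (1 - (1 + X^k) t^k + X t^(k+1))`. Expanding the
inverse of this denominator as `∑_m t^(km) (1 + X^k - X t)^m`, its coefficient `a_{kq+r}`
(`invDenom`, `r < k`) vanishes for `q < r`, and otherwise has coefficient `(-1)^r C(q,r)` in
degree `r`. The factor `1 - X^k t^k` does not affect degrees below `k`, so `G (kq+r) = 0` exactly
when `q < r`; for `N = |n| + 1` these are the intervals of the statement.
-/

/-- The coefficient of `t^n` in the power series `1 / (1 - (1 + X^k) t^k + X t^(k+1))`. -/
noncomputable def invDenom (k : ℕ) (n : ℤ) : ℤ[X] :=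
  if hneg : n < 0 then 0
  else if hzero : n = 0 then 1
  else if hk : 0 < k then (1 + X ^ k) * invDenom k (n - k) - X * invDenom k (n - k - 1)
  else 0
termination_by n.toNat
decreasing_by all_goals omega

section invDenom

variable {k : ℕ}

theorem invDenom_of_neg {n : ℤ} (hn : n < 0) : invDenom k n = 0 := by
  rw [invDenom, dif_pos hn]

theorem invDenom_zero : invDenom k 0 = 1 := by
  rw [invDenom]
  simp

theorem invDenom_of_pos (hk : 0 < k) {n : ℤ} (hn : 0 < n) :
    invDenom k n = (1 + X ^ k) * invDenom k (n - k) - X * invDenom k (n - k - 1) := by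
  rw [invDenom, dif_neg (by omega), dif_neg (by omega), dif_pos hk]

theorem invDenom_eq_zero_of_lt {q r : ℕ} (hr : r < k) (hqr : q < r) :
    invDenom k (k * q + r) = 0 := by
  induction q generalizing r with
  | zero =>
    rw [invDenom_of_pos (by omega) (by push_cast; omega), invDenom_of_neg (by omega),
      invDenom_of_neg (by omega)]
    simp
  | succ q ih =>
    rw [invDenom_of_pos (by omega) (by push_cast; nlinarith),
      show (k * (q + 1 : ℕ) + r : ℤ) - k = k * q + r by push_cast; ring,
      show (k * q + r : ℤ) - 1 = k * q + (r - 1 : ℕ) by omega,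
      ih hr (by omega), ih (by omega) (by omega)]
    simp

theorem coeff_invDenom {q r : ℕ} (hr : r < k) :
    (invDenom k (k * q + r)).coeff r = (-1) ^ r * q.choose r := by
  induction q generalizing r with
  | zero =>
    rcases Nat.eq_zero_or_pos r with rfl | hr0
    · simp [invDenom_zero]
    · have h := invDenom_eq_zero_of_lt (q := 0) hr hr0
      simp_all [Nat.choose_eq_zero_of_lt hr0]
  | succ q ih =>
    rw [invDenom_of_pos (by omega) (by push_cast; nlinarith),
      show (k * (q + 1 : ℕ) + r : ℤ) - k = k * q + r by push_cast; ring,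
      coeff_sub, add_mul, one_mul, coeff_add, coeff_X_pow_mul', if_neg (by omega), add_zero, ih hr]
    rcases r with _ | r
    · simp
    · rw [show (k * q + (r + 1 : ℕ) : ℤ) - 1 = k * q + r by push_cast; ring, coeff_X_mul,
        ih (by omega), Nat.choose_succ_succ]
      push_cast
      ring

end invDenom

noncomputable def fibReflected (k : ℕ) (n : ℤ) : ℤ[X] :=
  invDenom k n - X ^ k * invDenom k (n - k)

theorem sum_X_pow_mul_fibReflected {k : ℕ} (hk : 0 < k) {n : ℤ} (hn : k ≤ n) :
    ∑ j ∈ range k, X ^ j * fibReflected k (n - j) = fibReflected k (n - k) := by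
  let f (j : ℕ) : ℤ[X] := X ^ j * invDenom k (n - k - j)
  have hterm : ∀ j ∈ range k, X ^ j * fibReflected k (n - j) = f j - f (j + 1) := by
    intro j hj
    have hj : (j : ℤ) < k := by exact_mod_cast mem_range.mp hj
    simp only [f, fibReflected, invDenom_of_pos hk (show 0 < n - j by omega)]
    rw [show n - k - (j + 1 : ℕ) = n - k - j - 1 by push_cast; ring, sub_right_comm n (j : ℤ)]
    ring
  rw [sum_congr rfl hterm, sum_range_sub']
  simp only [f, fibReflected, pow_zero, one_mul, Nat.cast_zero, sub_zero]

theorem fibReflected_eq_zero_iff {k q r : ℕ} (hr : r < k) :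
    fibReflected k (k * q + r) = 0 ↔ q < r := by
  constructor
  · intro h
    have hcoeff := congrArg (coeff · r) h
    simp only [fibReflected, coeff_sub, coeff_X_pow_mul', if_neg (show ¬k ≤ r by omega),
      coeff_invDenom hr, sub_zero, coeff_zero] at hcoeff
    by_contra! hrq
    simp [(Nat.choose_pos hrq).ne'] at hcoeff
  · intro hqr
    rw [fibReflected, invDenom_eq_zero_of_lt hr hqr]
    rcases q with _ | q
    · rw [invDenom_of_neg (by push_cast; omega)]
      simp
    · rw [show (k * (q + 1 : ℕ) + r : ℤ) - k = k * q + r by push_cast; ring,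
        invDenom_eq_zero_of_lt hr (by omega)]
      simp

theorem fib_one_sub_eq_fibReflected {k : ℕ} (hk : 0 < k) {F : ℤ → ℤ[X]}
    (hrec : ∀ n : ℤ, F n = ∑ i ∈ range k, X ^ (k - 1 - i) * F (n - 1 - (i : ℤ)))
    (hF1 : F 1 = 1) (hF0 : ∀ m : ℕ, m ≤ k - 2 → F (-(m : ℤ)) = 0) (N : ℕ) :
    F (1 - N) = fibReflected k N := by
  induction N using Nat.strong_induction_on with
  | _ N ih =>
  rcases Nat.lt_or_ge N k with hNk | hkN
  · rcases Nat.eq_zero_or_pos N with rfl | hN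
    · simp [hF1, fibReflected, invDenom_zero, invDenom_of_neg (show -(k : ℤ) < 0 by omega)]
    · have hA := invDenom_eq_zero_of_lt (q := 0) hNk hN
      simp only [Nat.cast_zero, mul_zero, zero_add] at hA
      rw [show 1 - (N : ℤ) = -((N - 1 : ℕ) : ℤ) by omega, hF0 _ (by omega), fibReflected, hA,
        invDenom_of_neg (by omega)]
      simp
  · have hF : F (1 - (N - k : ℕ)) = ∑ j ∈ range k, X ^ j * F (1 - (N - j : ℤ)) := by
      rw [hrec, ← sum_range_reflect]
      refine sum_congr rfl fun j hj => ?_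
      have hj := mem_range.mp hj
      rw [show k - 1 - (k - 1 - j) = j by omega]
      congr 2
      push_cast [Nat.sub_sub, Nat.cast_sub hkN, Nat.cast_sub (show 1 + j ≤ k by omega)]
      ring
    have hG := (sum_X_pow_mul_fibReflected hk (n := N) (by exact_mod_cast hkN)).symm
    rw [ih _ (by omega), Nat.cast_sub hkN] at hF
    rw [range_eq_Ico, sum_eq_sum_Ico_succ_bot hk] at hF hG
    have htail : ∑ j ∈ Ico (0 + 1) k, X ^ j * F (1 - (N - j : ℤ)) =
        ∑ j ∈ Ico (0 + 1) k, X ^ j * fibReflected k (N - j) := by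
      refine sum_congr rfl fun j hj => ?_
      have hj := mem_Ico.mp hj
      rw [← Nat.cast_sub (by omega), ih _ (by omega)]
    rw [htail] at hF
    simpa using add_right_cancel (hF.symm.trans hG)

theorem div_lt_mod_iff_exists_interval {k : ℕ} (hk : 0 < k) (M : ℕ) :
    (M + 1) / k < (M + 1) % k ↔ ∃ s : ℕ, s ≤ k - 2 ∧
      ((s : ℤ) * (k + 1) ≤ M ∧ (M : ℤ) ≤ ((s : ℤ) + 1) * k - 2) := by
  have hdiv := Nat.div_add_mod (M + 1) k
  have hmod := Nat.mod_lt (M + 1) hk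
  set q := (M + 1) / k
  set r := (M + 1) % k
  constructor
  · intro hqr
    refine ⟨q, by omega, ?_, ?_⟩ <;> zify at hdiv hmod hqr <;> nlinarith
  · rintro ⟨s, -, hlow, hupp⟩
    have hq : q = s := by
      refine Nat.div_eq_of_lt_le ?_ ?_ <;> zify <;> nlinarith
    subst hq
    zify at hdiv
    nlinarith

/-- For `n ≤ 0`, the `k`-generalized Fibonacci polynomial `F n` is the zero
polynomial iff `|n|` lies in one of the intervals `[s(k+1), (s+1)k - 2]` with `0 ≤ s ≤ k-2`. -/
theorem fib_poly_vanishing_intervals (k : ℕ) (hk : 2 ≤ k)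
    (F : ℤ → Polynomial ℤ)
    (hrec : ∀ n : ℤ, F n = ∑ i ∈ Finset.range k, X ^ (k - 1 - i) * F (n - 1 - (i : ℤ)))
    (hF1 : F 1 = 1)
    (hF0 : ∀ m : ℕ, m ≤ k - 2 → F (-(m : ℤ)) = 0)
    (n : ℤ) (hn : n ≤ 0) :
    F n = 0 ↔ ∃ s : ℕ, s ≤ k - 2 ∧
      ((s : ℤ) * (k + 1) ≤ |n| ∧ |n| ≤ ((s : ℤ) + 1) * k - 2) := by
  have hk0 : 0 < k := by omega
  obtain ⟨M, rfl⟩ : ∃ M : ℕ, n = -M := ⟨n.natAbs, by omega⟩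
  have hFM : F (-M) = fibReflected k (k * ((M + 1) / k : ℕ) + ((M + 1) % k : ℕ)) := by
    rw [show (k * ((M + 1) / k : ℕ) + ((M + 1) % k : ℕ) : ℤ) = (M + 1 : ℕ) by
      exact_mod_cast Nat.div_add_mod (M + 1) k, ← fib_one_sub_eq_fibReflected hk0 hrec hF1 hF0]
    congr 1
    push_cast
    ring
  rw [hFM, fibReflected_eq_zero_iff (Nat.mod_lt _ hk0), div_lt_mod_iff_exists_interval hk0,
    abs_neg, Nat.abs_cast]
end

section
/- Let k ≥ 2 be an integer. In the ring of formal power series in w with coefficients in ℤ[x], the generating function of the k-generalized Fibonacci polynomials at nonpositive indices satisfies (1 − (1 + x^k)·w^k + x·w^{k+1}) · Σ_{m=0}^∞ 𝓕_{−m,k}(x)·w^m = w^{k−1} − x·w^k. -/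
open Polynomial

/-!
Taking `x` times the defining recurrence at `n + 1` minus the recurrence at `n`, the two sums
telescope to the three-term recurrence `F (n - k) = (1 + x^k) F n - x F (n + 1)`, whose reversed
characteristic polynomial is `1 - (1 + x^k) w^k + x w^(k+1)`. Multiplying the generating function
by it therefore kills every coefficient beyond `w^k`, and the first `k + 1` coefficients come from
the initial values `F 0 = ⋯ = F (2 - k) = 0`, `F (1 - k) = 1` and `F (-k) = -x`.
-/

section Recurrence

variable {R : Type*} [CommRing R] {k : ℕ} {x : R} {F : ℤ → R}

theorem eq_sum_pow_mul_of_recurrence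
    (hrec : ∀ n : ℤ, F n = ∑ i ∈ Finset.range k, x ^ (k - 1 - i) * F (n - 1 - i)) (n : ℤ) :
    F n = ∑ i ∈ Finset.range k, x ^ i * F (n - k + i) := by
  rw [hrec, ← Finset.sum_range_reflect]
  refine Finset.sum_congr rfl fun i hi => ?_
  have hik : i < k := Finset.mem_range.mp hi
  congr 2
  · omega
  · push_cast [Nat.cast_sub (by omega : i ≤ k - 1), Nat.cast_sub (by omega : 1 ≤ k)]
    ring

theorem three_term_of_recurrence
    (hrec : ∀ n : ℤ, F n = ∑ i ∈ Finset.range k, x ^ (k - 1 - i) * F (n - 1 - i)) (n : ℤ) :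
    F (n - k) = (1 + x ^ k) * F n - x * F (n + 1) := by
  have htel : x * F (n + 1) - F n = x ^ k * F n - F (n - k) := by
    calc x * F (n + 1) - F n
        = ∑ i ∈ Finset.range k, (x ^ (i + 1) * F (n - k + ↑(i + 1)) - x ^ i * F (n - k + i)) := by
          rw [Finset.sum_sub_distrib, eq_sum_pow_mul_of_recurrence hrec (n + 1),
            eq_sum_pow_mul_of_recurrence hrec n, Finset.mul_sum]
          congr 1
          refine Finset.sum_congr rfl fun i _ => ?_
          rw [pow_succ', mul_assoc]
          congr 3
          push_cast
          ring
      _ = x ^ k * F n - F (n - k) := by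
          rw [Finset.sum_range_sub (fun i : ℕ => x ^ i * F (n - k + i))]
          simp
  linear_combination htel

end Recurrence

namespace PowerSeries

variable {R : Type*} [CommRing R]

theorem mul_mk_eq_trunc_of_recurrence (a b : R) (k : ℕ) (g : ℕ → R)
    (hg : ∀ m, g (m + k + 1) = a * g (m + 1) - b * g m) :
    (1 - C a * X ^ k + C b * X ^ (k + 1)) * mk g =
      (trunc (k + 1) (mk g) : R⟦X⟧) - C (a * g 0) * X ^ k := by
  ext n
  rw [show (1 - C a * X ^ k + C b * X ^ (k + 1)) * mk g
      = mk g - C a * (mk g * X ^ k) + C b * (mk g * X ^ (k + 1)) by ring]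
  simp only [map_add, map_sub, coeff_C_mul, coeff_mul_X_pow', coeff_mk,
    Polynomial.coeff_coe, coeff_trunc]
  obtain hlt | rfl | ⟨m, rfl⟩ : n < k ∨ n = k ∨ ∃ m, n = m + k + 1 :=
    (lt_trichotomy n k).imp_right (Or.imp_right fun h => ⟨n - k - 1, by omega⟩)
  · simp [hlt.not_ge, show n < k + 1 by omega, show ¬ k + 1 ≤ n by omega]
  · simp
  · rw [if_pos (by omega), if_pos (by omega), if_neg (by omega), if_pos (by omega),
      show m + k + 1 - k = m + 1 by omega, show m + k + 1 - (k + 1) = m by omega, coeff_C,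
      if_neg m.succ_ne_zero, hg m]
    ring

end PowerSeries

/-- In `(ℤ[x])⟦w⟧`, the generating function of the `k`-generalized Fibonacci
polynomials at nonpositive indices satisfies
`(1 - (1 + x^k) w^k + x w^(k+1)) · Σ_m F(-m) w^m = w^(k-1) - x w^k`. -/
theorem fib_poly_neg_genfun (k : ℕ) (hk : 2 ≤ k)
    (F : ℤ → Polynomial ℤ)
    (hrec : ∀ n : ℤ, F n = ∑ i ∈ Finset.range k, X ^ (k - 1 - i) * F (n - 1 - (i : ℤ)))
    (hF1 : F 1 = 1)
    (hF0 : ∀ m : ℕ, m ≤ k - 2 → F (-(m : ℤ)) = 0) :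
    (1 - PowerSeries.C (R := Polynomial ℤ) (1 + X ^ k) * PowerSeries.X ^ k
        + PowerSeries.C (R := Polynomial ℤ) X * PowerSeries.X ^ (k + 1)) *
      PowerSeries.mk (fun m : ℕ => F (-(m : ℤ))) =
    PowerSeries.X ^ (k - 1) - PowerSeries.C (R := Polynomial ℤ) X * PowerSeries.X ^ k := by
  obtain ⟨j, rfl⟩ : ∃ j, k = j + 2 := ⟨k - 2, by omega⟩
  have hzero : F 0 = 0 := by simpa using hF0 0 (by omega)
  have hlast : F (-(j + 1 : ℕ)) = 1 := by
    have h := hrec 1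
    rw [Finset.sum_range_succ, Finset.sum_eq_zero fun i hi => ?_] at h
    · simpa [hF1] using h.symm
    · simp [hF0 i (by simp at hi; omega)]
  have hnext : F (-(j + 2 : ℕ)) = -X := by
    simpa [hzero, hF1] using three_term_of_recurrence hrec 0
  have hg : ∀ m : ℕ, F (-(m + (j + 2) + 1 : ℕ)) =
      (1 + X ^ (j + 2)) * F (-(m + 1 : ℕ)) - X * F (-(m : ℕ)) := by
    intro m
    convert three_term_of_recurrence hrec (-(m + 1 : ℕ)) using 4 <;> push_cast <;> ring
  have htrunc : PowerSeries.trunc (j + 1) (PowerSeries.mk fun m : ℕ => F (-(m : ℤ))) = 0 := by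
    refine Polynomial.ext fun m => ?_
    simp only [PowerSeries.coeff_trunc, PowerSeries.coeff_mk, Polynomial.coeff_zero]
    split_ifs with hm
    exacts [hF0 m (by omega), rfl]
  rw [PowerSeries.mul_mk_eq_trunc_of_recurrence _ _ _ _ hg, PowerSeries.trunc_succ,
    PowerSeries.trunc_succ, htrunc]
  simp only [PowerSeries.coeff_mk, hlast, hnext, Nat.cast_zero, neg_zero, hzero, mul_zero,
    map_zero, zero_mul, sub_zero, zero_add, Polynomial.coe_add, Polynomial.coe_monomial,
    PowerSeries.X_pow_eq, ← PowerSeries.monomial_zero_eq_C, PowerSeries.monomial_mul_monomial]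
  simp [sub_eq_add_neg]
end

section
/- Let k ≥ 2 be an integer and let n ≤ 0 be an integer, and set q = q_{n,k} and r = r_{n,k}. Then the coefficient of x^j in 𝓕_{n,k}(x) is zero for every j < r, and the coefficient of x^r in 𝓕_{n,k}(x) equals (−1)^r · C(q, r) (which is zero when q < r). In particular, if q ≥ r then 𝓕_{n,k} is not the zero polynomial. -/
/-!
Put `G m = F (1 - m)` for `m : ℕ`. Read at `n = 1 - m`, the recurrence says
`∑_{d<k} X^d G(m + k - d) = G m`, with `G 0 = 1` and `G 1 = ⋯ = G (k - 1) = 0`.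
For `j ≤ r < k`, the coefficient of `X^j` in this identity at `m = q k + r` expresses
`coeff j (G ((q+1) k + r))` through `coeff j (G (q k + r))` and the coefficients `coeff (j - d)` of
`G ((q+1) k + r - d)`, `1 ≤ d ≤ j`. So the claim follows by induction on `q` and then on `r`,
the new lowest coefficient being given by `∑_{s ≤ r} (-1)^s C(q+1, s) = (-1)^r C(q, r)`.
-/

open Polynomial Finset

theorem coeff_sum_range_X_pow_mul {R : Type*} [Semiring R] (P : ℕ → R[X]) {k j : ℕ}
    (hj : j < k) :
    (∑ d ∈ range k, X ^ d * P d).coeff j = ∑ d ∈ range (j + 1), (P d).coeff (j - d) := by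
  rw [finsetSum_coeff, ← sum_subset (range_subset_range.2 hj)]
  · refine sum_congr rfl fun d hd ↦ ?_
    rw [coeff_X_pow_mul', if_pos (Nat.lt_succ_iff.1 (mem_range.1 hd))]
  · intro d _ hd
    rw [coeff_X_pow_mul', if_neg fun h ↦ hd (mem_range.2 (Nat.lt_succ_of_le h))]

theorem coeff_eq_of_sum_X_pow_mul_eq {k : ℕ} {G : ℕ → ℤ[X]}
    (hinit : ∀ r < k, G r = if r = 0 then 1 else 0)
    (hrec : ∀ m, ∑ d ∈ range k, X ^ d * G (m + k - d) = G m) (q : ℕ) {r j : ℕ}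
    (hr : r < k) (hj : j ≤ r) :
    (G (q * k + r)).coeff j = if j = r then (-1) ^ r * (q.choose r : ℤ) else 0 := by
  induction q generalizing r j with
  | zero =>
    rcases Nat.eq_zero_or_pos r with rfl | hr0
    · simp [hinit 0 hr, Nat.le_zero.1 hj]
    · simp [hinit r hr, hr0.ne', Nat.choose_eq_zero_of_lt hr0]
  | succ q ihq =>
    induction r using Nat.strong_induction_on generalizing j with
    | _ r ihr =>
    have hsum := congrArg (coeff · j) (hrec (q * k + r))
    simp only [coeff_sum_range_X_pow_mul _ (hj.trans_lt hr), sum_range_succ', ihq hr hj] at hsum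
    have hterm : ∀ d ∈ range j, (G (q * k + r + k - (d + 1))).coeff (j - (d + 1)) =
        if j = r then (-1) ^ (r - 1 - d) * ((q + 1).choose (r - 1 - d) : ℤ) else 0 := by
      intro d hd
      have hd : d < j := mem_range.1 hd
      rw [show q * k + r + k - (d + 1) = (q + 1) * k + (r - (d + 1)) by grind,
        ihr (r - (d + 1)) (by omega) (by omega) (by omega)]
      grind
    rw [sum_congr rfl hterm] at hsum
    simp only [Nat.sub_zero, show q * k + r + k = (q + 1) * k + r by ring] at hsum
    split_ifs at hsum ⊢ with hjr
    · subst hjr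
      have halt := Int.alternating_sum_range_choose_eq_choose (n := q) (m := j)
      rw [sum_range_succ, ← sum_range_reflect] at halt
      linarith
    · simpa using hsum

theorem sum_X_pow_mul_one_sub_eq {k : ℕ} {F : ℤ → ℤ[X]}
    (hrec : ∀ n : ℤ, F n = ∑ i ∈ range k, X ^ (k - 1 - i) * F (n - 1 - i)) (m : ℕ) :
    ∑ d ∈ range k, X ^ d * F (1 - (m + k - d : ℕ)) = F (1 - m) := by
  rw [hrec (1 - m), ← sum_range_reflect (fun d ↦ X ^ d * F (1 - (m + k - d : ℕ)))]
  refine sum_congr rfl fun d hd ↦ ?_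
  have hd : d < k := mem_range.1 hd
  congr 2; omega

/-- For `n ≤ 0`, with `q = ⌊(|n|+1)/k⌋` and `r = (|n|+1) mod k`, the lowest
term of the `k`-generalized Fibonacci polynomial `F n` is `(-1)^r C(q,r) x^r`; in particular
if `q ≥ r` then `F n` is not the zero polynomial. -/
theorem fib_poly_lowest_term_neg (k : ℕ) (hk : 2 ≤ k)
    (F : ℤ → Polynomial ℤ)
    (hrec : ∀ n : ℤ, F n = ∑ i ∈ Finset.range k, X ^ (k - 1 - i) * F (n - 1 - (i : ℤ)))
    (hF1 : F 1 = 1)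
    (hF0 : ∀ m : ℕ, m ≤ k - 2 → F (-(m : ℤ)) = 0)
    (n : ℤ) (hn : n ≤ 0) (q r : ℕ)
    (hq : q = ((-n).toNat + 1) / k)
    (hr : r = ((-n).toNat + 1) % k) :
    (∀ j : ℕ, j < r → (F n).coeff j = 0) ∧
    (F n).coeff r = (-1) ^ r * (q.choose r : ℤ) ∧
    (r ≤ q → F n ≠ 0) := by
  have hinit : ∀ r < k, F (1 - r) = if r = 0 then 1 else 0 := by
    intro r hrk
    split_ifs with hr0
    · simp [hr0, hF1]
    · simpa [show (1 - r : ℤ) = -((r - 1 : ℕ) : ℤ) by omega] using hF0 (r - 1) (by omega)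
  have hFn : F n = F (1 - (q * k + r : ℕ)) := by
    rw [hq, hr, Nat.div_add_mod']
    congr 1; omega
  have hrk : r < k := hr ▸ Nat.mod_lt _ (by omega)
  have hcoeff : ∀ j ≤ r, (F n).coeff j = if j = r then (-1) ^ r * (q.choose r : ℤ) else 0 :=
    fun j hj ↦ hFn ▸ coeff_eq_of_sum_X_pow_mul_eq (G := fun m ↦ F (1 - m)) hinit
      (sum_X_pow_mul_one_sub_eq hrec) q hrk hj
  refine ⟨fun j hj ↦ ?_, by simpa using hcoeff r le_rfl, fun hrq hF ↦ ?_⟩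
  · simpa [hj.ne] using hcoeff j hj.le
  · have := hcoeff r le_rfl
    simp [hF, (Nat.choose_pos hrq).ne'] at this
end

section
/- Let k ≥ 2 be an integer and n ≤ 0 an integer with q_{n,k} ≥ r_{n,k} (so 𝓕_{n,k} ≠ 0), and write q = q_{n,k}, r = r_{n,k}. If r = 0, then 𝓕_{n,k} has degree |n| + 1 − k and leading coefficient 1. If 1 ≤ r ≤ k−1, then 𝓕_{n,k} has degree |n| + 1 − k·r and leading coefficient (−1)^r · C(q−1, r−1). -/
/-!
Write `a m = 𝓕_{1-m,k}`. Read backwards, the defining recurrence says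
`∑_{i<k} X^(k-1-i) a (n+1+i) = a n`, so the generating function of `a` is
`(1 - X^k t^k) A(t)` with `A(t) = 1 / (1 - (1 + X^k) t^k + X t^(k+1))`. Its coefficients satisfy
`A M = (1 + X^k) A (M - k) - X A (M - k - 1)`, and induction on `q` shows that for `M = k q + r`
with `r < k` the top term of `A M` is `(-1)^r C(q, r) X^(M - k r)`, while `A M = 0` if `q < r`.
Since `a N = A (N - k) - X A (N - k - 1)`, the leading term of `a N` comes from `X A (N - k - 1)`
when `r ≥ 1`, and from `A (N - k)` when `r = 0`.
-/

open Polynomial Finset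

section Leading

variable {R : Type*} {d : ℕ}

theorem natDegree_eq_and_leadingCoeff_eq_of_le [Semiring R] {p : R[X]} {c : R}
    (hp : p.natDegree ≤ d) (hc : p.coeff d = c) (hc0 : c ≠ 0) :
    p.natDegree = d ∧ p.leadingCoeff = c := by
  have hd := natDegree_eq_of_le_of_coeff_ne_zero hp (hc ▸ hc0)
  exact ⟨hd, by rw [leadingCoeff, hd, hc]⟩

theorem one_add_X_pow_mul_leading [Semiring R] {p : R[X]} {n : ℕ} (hn : 0 < n)
    (hp : p.natDegree ≤ d) :
    ((1 + X ^ n) * p).natDegree ≤ d + n ∧ ((1 + X ^ n) * p).coeff (d + n) = p.coeff d := by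
  have hdeg : (1 + X ^ n : R[X]).natDegree ≤ n :=
    natDegree_add_le_of_degree_le (natDegree_one.trans_le n.zero_le) (natDegree_X_pow_le n)
  refine ⟨(natDegree_mul_le_of_le hdeg hp).trans_eq (add_comm _ _), ?_⟩
  rw [add_mul, one_mul, coeff_add, coeff_X_pow_mul, coeff_eq_zero_of_natDegree_lt (by omega),
    zero_add]

theorem X_mul_leading [Semiring R] {p : R[X]} (hp : p.natDegree ≤ d) :
    (X * p).natDegree ≤ d + 1 ∧ (X * p).coeff (d + 1) = p.coeff d :=
  ⟨(natDegree_mul_le_of_le natDegree_X_le hp).trans_eq (add_comm _ _), coeff_X_mul p d⟩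

theorem sub_leading [Ring R] {p q : R[X]} {a b : R} (hp : p.natDegree ≤ d ∧ p.coeff d = a)
    (hq : q.natDegree ≤ d ∧ q.coeff d = b) :
    (p - q).natDegree ≤ d ∧ (p - q).coeff d = a - b :=
  ⟨(natDegree_sub_le_of_le hp.1 hq.1).trans (max_self d).le, by rw [coeff_sub, hp.2, hq.2]⟩

end Leading

section FibRecip

variable {k : ℕ} [NeZero k]

/-- The coefficients of the power series `1 / (1 - (1 + X ^ k) t ^ k + X t ^ (k + 1))`. -/
noncomputable def fibRecip (k : ℕ) [NeZero k] : ℤ → ℤ[X]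
  | M => if M < 0 then 0 else if M = 0 then 1 else
      (1 + X ^ k) * fibRecip k (M - k) - X * fibRecip k (M - k - 1)
termination_by M => M.toNat
decreasing_by all_goals have := NeZero.pos k; omega

theorem fibRecip_of_neg {M : ℤ} (h : M < 0) : fibRecip k M = 0 := by
  rw [fibRecip, if_pos h]

theorem fibRecip_zero : fibRecip k 0 = 1 := by
  rw [fibRecip]; simp

theorem fibRecip_of_pos {M : ℤ} (h : 0 < M) :
    fibRecip k M = (1 + X ^ k) * fibRecip k (M - k) - X * fibRecip k (M - k - 1) := by
  rw [fibRecip, if_neg h.not_gt, if_neg h.ne']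

theorem fibRecip_of_pos_of_lt {M : ℤ} (h0 : 0 < M) (hk : M < k) : fibRecip k M = 0 := by
  rw [fibRecip_of_pos h0, fibRecip_of_neg (by omega), fibRecip_of_neg (by omega)]
  ring

theorem fibRecip_mul_succ_add (q : ℕ) {r : ℤ} (hr : 0 ≤ r) :
    fibRecip k (k * ↑(q + 1) + r) =
      (1 + X ^ k) * fibRecip k (k * q + r) - X * fibRecip k (k * q + r - 1) := by
  have hk := NeZero.pos k
  rw [fibRecip_of_pos (by push_cast; positivity)]
  congr 3 <;> push_cast <;> ring

theorem coeff_fibRecip_eq_zero_of_lt {M : ℤ} {j : ℕ} (h : M < j) :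
    (fibRecip k M).coeff j = 0 := by
  rcases lt_trichotomy M 0 with hM | rfl | hM
  · rw [fibRecip_of_neg hM, coeff_zero]
  · rw [fibRecip_zero, coeff_one, if_neg (by omega)]
  · obtain ⟨j, rfl⟩ : ∃ j', j = j' + 1 := ⟨j - 1, by omega⟩
    rw [fibRecip_of_pos hM, coeff_sub, add_mul, one_mul, coeff_add, coeff_X_pow_mul', coeff_X_mul,
      coeff_fibRecip_eq_zero_of_lt (by omega), coeff_fibRecip_eq_zero_of_lt (j := j) (by omega)]
    split_ifs
    · rw [coeff_fibRecip_eq_zero_of_lt (by omega)]; simp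
    · simp
termination_by M.toNat
decreasing_by all_goals have := NeZero.pos k; omega

theorem natDegree_fibRecip_le {M : ℤ} {j : ℕ} (h : M ≤ j) : (fibRecip k M).natDegree ≤ j :=
  natDegree_le_iff_coeff_eq_zero.mpr fun _ hN ↦ coeff_fibRecip_eq_zero_of_lt (by omega)

theorem X_mul_fibRecip_sub_one_leading_of_lt {M : ℤ} {j : ℕ} (h : M < j) :
    (X * fibRecip k (M - 1)).natDegree ≤ j ∧ (X * fibRecip k (M - 1)).coeff j = 0 := by
  rcases j with _ | j
  · simp [fibRecip_of_neg (show M - 1 < 0 by omega)]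
  obtain ⟨hdeg, hcoeff⟩ := X_mul_leading (natDegree_fibRecip_le (k := k) (M := M - 1) (j := j)
    (by omega))
  exact ⟨hdeg, hcoeff.trans (coeff_fibRecip_eq_zero_of_lt (by omega))⟩

theorem fibRecip_mul_add_eq_zero {q r : ℕ} (hqr : q < r) (hrk : r < k) :
    fibRecip k (k * q + r) = 0 := by
  induction q generalizing r with
  | zero => exact fibRecip_of_pos_of_lt (by simp; omega) (by simp; omega)
  | succ q ih =>
    obtain ⟨r, rfl⟩ : ∃ r', r = r' + 1 := ⟨r - 1, by omega⟩
    have hidx : (k * q + ↑(r + 1) - 1 : ℤ) = k * q + r := by push_cast; ring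
    rw [fibRecip_mul_succ_add q (by positivity), ih (by omega) hrk, hidx, ih (by omega) (by omega)]
    ring

theorem fibRecip_mul_add_leading {q r : ℕ} (hrq : r ≤ q) (hrk : r < k) :
    (fibRecip k (k * q + r)).natDegree ≤ k * (q - r) + r ∧
      (fibRecip k (k * q + r)).coeff (k * (q - r) + r) = (-1) ^ r * q.choose r := by
  have hk := NeZero.pos k
  induction q generalizing r with
  | zero =>
    obtain rfl : r = 0 := by omega
    simp [fibRecip_zero]
  | succ q ih =>
    rw [fibRecip_mul_succ_add q (by positivity)]
    have head : ((1 + X ^ k) * fibRecip k (k * q + r)).natDegree ≤ k * (q + 1 - r) + r ∧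
        ((1 + X ^ k) * fibRecip k (k * q + r)).coeff (k * (q + 1 - r) + r) =
          (-1 : ℤ) ^ r * q.choose r := by
      rcases le_or_gt r q with hrq | hqr
      · obtain ⟨hdeg, hcoeff⟩ := ih hrq hrk
        rw [show k * (q + 1 - r) + r = k * (q - r) + r + k by
          rw [show q + 1 - r = q - r + 1 by omega, mul_add_one]; ring, ← hcoeff]
        exact one_add_X_pow_mul_leading hk hdeg
      · rw [fibRecip_mul_add_eq_zero hqr hrk, Nat.choose_eq_zero_of_lt hqr]
        simp
    rcases r with _ | r
    · have tail := X_mul_fibRecip_sub_one_leading_of_lt (k := k) (M := k * q) (j := k * (q + 1))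
        (by push_cast; linarith)
      simp only [Nat.cast_zero, add_zero, Nat.sub_zero, pow_zero, Nat.choose_zero_right] at head ⊢
      simpa using sub_leading head tail
    · have hidx : (k * q + ↑(r + 1) - 1 : ℤ) = k * q + r := by push_cast; ring
      have hD : k * (q + 1 - (r + 1)) + (r + 1) = k * (q - r) + r + 1 := by
        rw [show q + 1 - (r + 1) = q - r by omega]; ring
      obtain ⟨hdeg, hcoeff⟩ := ih (r := r) (by omega) (by omega)
      rw [hD] at head
      rw [hidx, hD]
      obtain ⟨tdeg, tcoeff⟩ := X_mul_leading hdeg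
      obtain ⟨hdeg', hcoeff'⟩ := sub_leading head ⟨tdeg, tcoeff.trans hcoeff⟩
      refine ⟨hdeg', hcoeff'.trans ?_⟩
      rw [Nat.choose_succ_succ']
      push_cast
      ring

theorem natDegree_fibRecip_mul_add_lt {q r : ℕ} (hr : 0 < r) (hrk : r < k) :
    (fibRecip k (k * q + r)).natDegree < k * (q + 1 - r) + r := by
  rcases le_or_gt r q with hrq | hqr
  · have := Nat.mul_le_mul_left k (show q - r + 1 ≤ q + 1 - r by omega)
    have := (fibRecip_mul_add_leading hrq hrk).1
    nlinarith [NeZero.pos k]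
  · rw [fibRecip_mul_add_eq_zero hqr hrk, natDegree_zero]; omega

theorem X_mul_fibRecip_mul_sub_one_leading (hk : 2 ≤ k) (p : ℕ) :
    (X * fibRecip k (k * p - 1)).natDegree ≤ k * p ∧
      (X * fibRecip k (k * p - 1)).coeff (k * p) = 0 := by
  rcases p with _ | p
  · simp [fibRecip_of_neg]
  have hidx : (k * ↑(p + 1) - 1 : ℤ) = k * p + ↑(k - 1) := by
    push_cast [Nat.cast_sub (by omega : 1 ≤ k)]; ring
  have hD : k * (p + 1) = (k * p + (k - 1)) + 1 := by rw [mul_add_one]; omega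
  have hlt := natDegree_fibRecip_mul_add_lt (k := k) (q := p) (r := k - 1) (by omega) (by omega)
  have hle := Nat.mul_le_mul_left k (show p + 1 - (k - 1) ≤ p by omega)
  rw [hidx, hD]
  obtain ⟨tdeg, tcoeff⟩ :=
    X_mul_leading (p := fibRecip k (k * p + ↑(k - 1))) (d := k * p + (k - 1)) (by omega)
  exact ⟨tdeg, by rw [tcoeff, coeff_eq_zero_of_natDegree_lt (by omega)]⟩

end FibRecip

section FibNeg

variable {k : ℕ} [NeZero k]

noncomputable def fibNeg (k : ℕ) [NeZero k] (m : ℤ) : ℤ[X] :=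
  fibRecip k m - X ^ k * fibRecip k (m - k)

theorem fibNeg_of_pos {m : ℤ} (h : 0 < m) :
    fibNeg k m = fibRecip k (m - k) - X * fibRecip k (m - k - 1) := by
  rw [fibNeg, fibRecip_of_pos h]; ring

theorem sum_X_pow_mul_fibNeg (n : ℕ) :
    ∑ i ∈ range k, X ^ (k - 1 - i) * fibNeg k (n + 1 + i) = fibNeg k n := by
  have step : ∀ i ∈ range k, X ^ (k - 1 - i) * fibNeg k (n + 1 + i) =
      X ^ (k - (i + 1)) * fibRecip k (n + ↑(i + 1) - k) -
        X ^ (k - i) * fibRecip k (n + i - k) := by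
    intro i hi
    have hki : k - i = k - (i + 1) + 1 := by have := mem_range.mp hi; omega
    rw [fibNeg_of_pos (by positivity), hki, pow_succ, Nat.sub_sub, add_comm 1 i]
    push_cast
    ring_nf
  rw [sum_congr rfl step, sum_range_sub (fun i ↦ X ^ (k - i) * fibRecip k (n + i - k)), fibNeg]
  simp

/-- The recurrence `u (n + k) = u n - ∑_{0 < j < k} X ^ (k - j) * u (n + j)`, satisfied by
`m ↦ 𝓕_{1-m,k}`. -/
noncomputable def fibNegRecurrence (k : ℕ) : LinearRecurrence ℤ[X] :=
  ⟨k, fun j ↦ if (j : ℕ) = 0 then 1 else -X ^ (k - j)⟩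

theorem isSolution_fibNegRecurrence {u : ℕ → ℤ[X]}
    (h : ∀ n, ∑ i ∈ range k, X ^ (k - 1 - i) * u (n + 1 + i) = u n) :
    (fibNegRecurrence k).IsSolution u := by
  intro n
  obtain ⟨k, rfl⟩ : ∃ k', k = k' + 1 := Nat.exists_eq_add_one.mpr (NeZero.pos k)
  have hn := h n
  rw [sum_range_succ] at hn
  change u (n + (k + 1)) =
    ∑ i : Fin (k + 1), (if (i : ℕ) = 0 then 1 else -X ^ (k + 1 - i)) * u (n + i)
  rw [Fin.sum_univ_eq_sum_range (fun j ↦ (if j = 0 then 1 else -X ^ (k + 1 - j)) * u (n + j)),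
    sum_range_succ', add_zero, ← hn]
  simp [add_assoc, add_comm 1]

theorem fib_one_sub_eq_fibNeg (F : ℤ → ℤ[X])
    (hrec : ∀ n : ℤ, F n = ∑ i ∈ Finset.range k, X ^ (k - 1 - i) * F (n - 1 - (i : ℤ)))
    (hF1 : F 1 = 1) (hF0 : ∀ m : ℕ, m ≤ k - 2 → F (-(m : ℤ)) = 0) (m : ℕ) :
    F (1 - m) = fibNeg k m := by
  have hF : (fibNegRecurrence k).IsSolution fun m : ℕ ↦ F (1 - m) :=
    isSolution_fibNegRecurrence fun n ↦ by
      rw [hrec]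
      refine sum_congr rfl fun i _ ↦ ?_
      push_cast; ring_nf
  have hG : (fibNegRecurrence k).IsSolution fun m : ℕ ↦ fibNeg k m :=
    isSolution_fibNegRecurrence fun n ↦ by exact_mod_cast sum_X_pow_mul_fibNeg n
  refine congrFun (((fibNegRecurrence k).eq_iff_eqOn_range_order _ _ hF hG).2 fun j hj ↦ ?_) m
  have hjk : j < k := mem_range.mp hj
  dsimp only
  rcases j with _ | j
  · simp [hF1, fibNeg, fibRecip_zero, fibRecip_of_neg (show -(k : ℤ) < 0 by simp [NeZero.pos k])]
  · rw [fibNeg, fibRecip_of_pos_of_lt (by omega) (by omega), fibRecip_of_neg (by omega)]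
    simpa using hF0 j (by omega)

theorem fibNeg_mul_succ_leading (hk : 2 ≤ k) (p : ℕ) :
    (fibNeg k (k * (p + 1))).natDegree ≤ k * p ∧
      (fibNeg k (k * (p + 1))).coeff (k * p) = 1 := by
  have hidx : (k * (p + 1) - k : ℤ) = k * p + (0 : ℕ) := by push_cast; ring
  have hidx' : (k * p + (0 : ℕ) - 1 : ℤ) = k * p - 1 := by push_cast; ring
  rw [fibNeg_of_pos (by positivity), hidx, hidx']
  have head := fibRecip_mul_add_leading (k := k) (Nat.zero_le p) (by omega)
  simp only [Nat.sub_zero, add_zero, pow_zero, Nat.choose_zero_right] at head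
  simpa using sub_leading head (X_mul_fibRecip_mul_sub_one_leading hk p)

theorem fibNeg_mul_succ_add_leading {p r : ℕ} (hr : 0 < r) (hrp : r ≤ p + 1) (hrk : r < k) :
    (fibNeg k (k * (p + 1) + r)).natDegree ≤ k * (p + 1 - r) + r ∧
      (fibNeg k (k * (p + 1) + r)).coeff (k * (p + 1 - r) + r) =
        (-1) ^ r * p.choose (r - 1) := by
  obtain ⟨r, rfl⟩ : ∃ r', r = r' + 1 := ⟨r - 1, by omega⟩
  have hidx₁ : (k * (p + 1) + ↑(r + 1) - k : ℤ) = k * p + ↑(r + 1) := by ring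
  have hidx₂ : (k * p + ↑(r + 1) - 1 : ℤ) = k * p + r := by push_cast; ring
  have hD : k * (p + 1 - (r + 1)) + (r + 1) = k * (p - r) + r + 1 := by
    rw [show p + 1 - (r + 1) = p - r by omega]; ring
  rw [fibNeg_of_pos (by positivity), hidx₁, hidx₂, hD]
  have hlt := natDegree_fibRecip_mul_add_lt (q := p) hr hrk
  have head : (fibRecip k (k * p + ↑(r + 1))).natDegree ≤ k * (p - r) + r + 1 ∧
      (fibRecip k (k * p + ↑(r + 1))).coeff (k * (p - r) + r + 1) = 0 :=
    ⟨by omega, coeff_eq_zero_of_natDegree_lt (by omega)⟩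
  obtain ⟨hdeg, hcoeff⟩ :=
    fibRecip_mul_add_leading (k := k) (q := p) (r := r) (by omega) (by omega)
  obtain ⟨tdeg, tcoeff⟩ := X_mul_leading hdeg
  obtain ⟨hdeg', hcoeff'⟩ := sub_leading head ⟨tdeg, tcoeff.trans hcoeff⟩
  refine ⟨hdeg', hcoeff'.trans ?_⟩
  rw [Nat.add_sub_cancel]
  ring

end FibNeg

/-- For `n ≤ 0` with `q ≥ r` (so `F n ≠ 0`): if `r = 0` then `F n` has
degree `|n| + 1 - k` and leading coefficient `1`; if `1 ≤ r ≤ k-1` then `F n` has degree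
`|n| + 1 - k r` and leading coefficient `(-1)^r C(q-1, r-1)`. -/
theorem fib_poly_degree_leading_neg (k : ℕ) (hk : 2 ≤ k)
    (F : ℤ → Polynomial ℤ)
    (hrec : ∀ n : ℤ, F n = ∑ i ∈ Finset.range k, X ^ (k - 1 - i) * F (n - 1 - (i : ℤ)))
    (hF1 : F 1 = 1)
    (hF0 : ∀ m : ℕ, m ≤ k - 2 → F (-(m : ℤ)) = 0)
    (n : ℤ) (hn : n ≤ 0) (q r : ℕ)
    (hq : q = ((-n).toNat + 1) / k)
    (hr : r = ((-n).toNat + 1) % k)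
    (hqr : r ≤ q) :
    (r = 0 →
      (F n).natDegree = (-n).toNat + 1 - k ∧ (F n).leadingCoeff = 1) ∧
    (1 ≤ r →
      (F n).natDegree = (-n).toNat + 1 - k * r ∧
      (F n).leadingCoeff = (-1) ^ r * ((q - 1).choose (r - 1) : ℤ)) := by
  have : NeZero k := ⟨by omega⟩
  set N := (-n).toNat + 1
  have hN : N = k * q + r := by rw [hq, hr, Nat.div_add_mod]
  obtain ⟨p, rfl⟩ : ∃ p, q = p + 1 := Nat.exists_eq_add_one.mpr (Nat.pos_of_ne_zero (by
    rintro rfl; omega))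
  have hFn : F n = fibNeg k (k * (p + 1) + r) := by
    have h := fib_one_sub_eq_fibNeg F hrec hF1 hF0 N
    rwa [show (1 : ℤ) - N = n by omega, hN, Nat.cast_add, Nat.cast_mul, Nat.cast_succ] at h
  have hrk : r < k := hr ▸ Nat.mod_lt N (NeZero.pos k)
  refine ⟨fun hr0 ↦ ?_, fun hr1 ↦ ?_⟩
  · subst hr0
    obtain ⟨hdeg, hcoeff⟩ := fibNeg_mul_succ_leading hk p
    have hD : N - k = k * p := by rw [hN, add_zero, mul_add_one, Nat.add_sub_cancel]
    rw [hFn, Nat.cast_zero, add_zero, hD]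
    exact natDegree_eq_and_leadingCoeff_eq_of_le hdeg hcoeff one_ne_zero
  · obtain ⟨hdeg, hcoeff⟩ := fibNeg_mul_succ_add_leading hr1 hqr hrk
    have hD : N - k * r = k * (p + 1 - r) + r := by
      rw [hN, Nat.mul_sub]; have := Nat.mul_le_mul_left k hqr; omega
    rw [hFn, hD, Nat.add_sub_cancel]
    exact natDegree_eq_and_leadingCoeff_eq_of_le hdeg hcoeff
      (mul_ne_zero (pow_ne_zero _ (by norm_num))
        (by exact_mod_cast (Nat.choose_pos (by omega)).ne'))
end

section
/- Let k ≥ 2 be an integer and n ≤ 0 an integer, and write q = q_{n,k}, r = r_{n,k}. (i) If r = 0 and |n| ≥ 2k − 1, then the coefficient of x^{|n|+1−2k} in 𝓕_{n,k}(x) equals 2q − 3 when k = 2 and equals q − 1 when k ≥ 3. (ii) If 1 ≤ r ≤ k−1 and q ≥ r + 1, then the coefficient of x^{|n|+1−k(r+1)} in 𝓕_{n,k}(x) equals (−1)^r · (r+1) · C(q−1, r). -/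
/-!
Put `G m = 𝓕_{1-m,k}`. Subtracting the defining recurrence at two consecutive indices gives the
three-term recurrence `G (m + k) = (1 + x^k) G m - x G (m - 1)`. For `m = (q + 1) k + r` with
`r < k`, induction on `q` shows that the coefficient of `x^((q - t) k + r) = x^(m - (t + 1) k)`
in `G m` is `(-1)^r C(q, t) C(t + 1, r)` as long as `t + 1 < r + k`: the three contributions of
the recurrence combine by Pascal's rule in both binomials, and for `r = 0` the contribution of
`x G (m - 1)`, which comes from the residue class `k - 1`, lies above the top degree. Taking
`t = r`, resp. `t = 1` when `r = 0`, gives the claim, except for `k = 2`, `r = 0`, where that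
contribution is the leading coefficient `-1` of `G (m - 3)` and a separate induction is needed.
-/
open Polynomial

/-- `G m` plays the role of `𝓕_{1-m,k}`; `add_succ` is the recurrence
`𝓕_n = (1 + x^k) 𝓕_{n+k} - x 𝓕_{n+k+1}` at `n = -m-k`. -/
structure IsReflectedFibPoly (k : ℕ) (G : ℕ → ℤ[X]) : Prop where
  zero : G 0 = 1
  eq_zero : ∀ m, 0 < m → m < k → G m = 0
  self : G k = 1
  add_succ : ∀ m, G (m + k + 1) = (1 + X ^ k) * G (m + 1) - X * G m

section Recurrence

variable {k : ℕ} {F : ℤ → ℤ[X]}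

theorem fib_add_eq_sum
    (hrec : ∀ n : ℤ, F n = ∑ i ∈ Finset.range k, X ^ (k - 1 - i) * F (n - 1 - (i : ℤ)))
    (n : ℤ) : F (n + k) = ∑ i ∈ Finset.range k, X ^ i * F (n + i) := by
  rw [hrec, ← Finset.sum_range_reflect]
  refine Finset.sum_congr rfl fun i hi => ?_
  rw [Finset.mem_range] at hi
  congr 2 <;> omega

theorem fib_eq_three_term (hk : 0 < k)
    (hrec : ∀ n : ℤ, F n = ∑ i ∈ Finset.range k, X ^ (k - 1 - i) * F (n - 1 - (i : ℤ)))
    (n : ℤ) : F n = (1 + X ^ k) * F (n + k) - X * F (n + k + 1) := by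
  obtain ⟨j, rfl⟩ : ∃ j, k = j + 1 := ⟨k - 1, by omega⟩
  have h₀ := fib_add_eq_sum hrec n
  have h₁ := fib_add_eq_sum hrec (n + 1)
  rw [Finset.sum_range_succ'] at h₀
  rw [Finset.sum_range_succ] at h₁
  have hshift : ∑ i ∈ Finset.range j, X ^ (i + 1) * F (n + (i + 1 : ℕ)) =
      X * ∑ i ∈ Finset.range j, X ^ i * F (n + 1 + i) := by
    rw [Finset.mul_sum]
    refine Finset.sum_congr rfl fun i _ => ?_
    rw [pow_succ', mul_assoc]
    congr 3
    push_cast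
    ring
  rw [hshift] at h₀
  rw [show n + ((j + 1 : ℕ) : ℤ) = n + 1 + j by push_cast; ring] at h₀ ⊢
  rw [show n + 1 + ((j + 1 : ℕ) : ℤ) = n + 1 + j + 1 by push_cast; ring] at h₁
  simp only [Nat.cast_zero, add_zero, pow_zero, one_mul] at h₀
  linear_combination -h₀ + X * h₁

theorem fib_two (hk : 0 < k)
    (hrec : ∀ n : ℤ, F n = ∑ i ∈ Finset.range k, X ^ (k - 1 - i) * F (n - 1 - (i : ℤ)))
    (hF1 : F 1 = 1) (hF0 : ∀ m : ℕ, m ≤ k - 2 → F (-(m : ℤ)) = 0) :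
    F 2 = X ^ (k - 1) := by
  obtain ⟨j, rfl⟩ : ∃ j, k = j + 1 := ⟨k - 1, by omega⟩
  rw [hrec, Finset.sum_range_succ', Finset.sum_eq_zero]
  · norm_num [hF1]
  · intro i hi
    rw [Finset.mem_range] at hi
    rw [show (2 : ℤ) - 1 - ((i + 1 : ℕ) : ℤ) = -(i : ℤ) by push_cast; ring,
      hF0 i (by omega), mul_zero]

theorem isReflectedFibPoly (hk : 0 < k)
    (hrec : ∀ n : ℤ, F n = ∑ i ∈ Finset.range k, X ^ (k - 1 - i) * F (n - 1 - (i : ℤ)))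
    (hF1 : F 1 = 1) (hF0 : ∀ m : ℕ, m ≤ k - 2 → F (-(m : ℤ)) = 0) :
    IsReflectedFibPoly k fun m => F (1 - m) where
  zero := by simpa using hF1
  eq_zero m hm hmk := by
    rw [show (1 : ℤ) - m = -((m - 1 : ℕ) : ℤ) by omega]
    exact hF0 _ (by omega)
  self := by
    rw [fib_eq_three_term hk hrec, sub_add_cancel, show (1 : ℤ) + 1 = 2 by norm_num,
      fib_two hk hrec hF1 hF0, hF1, ← pow_succ', Nat.sub_add_cancel hk]
    ring
  add_succ m := by
    rw [fib_eq_three_term hk hrec]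
    push_cast
    ring_nf

end Recurrence

namespace IsReflectedFibPoly

variable {k : ℕ} {G : ℕ → ℤ[X]}

theorem add_eq (hG : IsReflectedFibPoly k G) {m : ℕ} (hm : 0 < m) :
    G (m + k) = (1 + X ^ k) * G m - X * G (m - 1) := by
  obtain ⟨m, rfl⟩ := Nat.exists_eq_add_of_lt hm
  simpa [add_right_comm] using hG.add_succ m

theorem natDegree_lt (hG : IsReflectedFibPoly k G) (hk : 0 < k) {m : ℕ} (hm : 0 < m) :
    (G m).natDegree < m := by
  induction m using Nat.strong_induction_on with
  | _ m ih =>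
  rcases lt_trichotomy m k with hmk | rfl | hkm
  · simp [hG.eq_zero m hm hmk, hm]
  · simp [hG.self, hm]
  obtain ⟨m, rfl⟩ : ∃ j, m = j + k := ⟨m - k, by omega⟩
  have hm' : 0 < m := by omega
  have hle : (G (m - 1)).natDegree ≤ m - 1 := by
    rcases Nat.eq_zero_or_pos (m - 1) with h | h
    · simp [h, hG.zero]
    · exact (ih _ (by omega) h).le
  have hX : (1 + X ^ k : ℤ[X]).natDegree ≤ k :=
    (natDegree_add_le _ _).trans (by simp)
  rw [hG.add_eq hm']
  refine (natDegree_sub_le _ _).trans_lt (max_lt ?_ ?_)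
  · exact natDegree_mul_le.trans_lt (by linarith [ih m (by omega) hm'])
  · exact natDegree_mul_le.trans_lt (by rw [natDegree_X]; omega)

theorem coeff_self (hG : IsReflectedFibPoly k G) (hk : 0 < k) {m : ℕ} (hm : 0 < m) :
    (G m).coeff m = 0 :=
  coeff_eq_zero_of_natDegree_lt (hG.natDegree_lt hk hm)

theorem coeff_add (hG : IsReflectedFibPoly k G) {m : ℕ} (hm : 0 < m) (e : ℕ) :
    (G (m + k)).coeff e = (G m).coeff e + (if k ≤ e then (G m).coeff (e - k) else 0) -
      (if 1 ≤ e then (G (m - 1)).coeff (e - 1) else 0) := by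
  rw [hG.add_eq hm, add_mul, one_mul, coeff_sub, Polynomial.coeff_add, mul_comm (X ^ k),
    coeff_mul_X_pow', mul_comm X, ← pow_one X, coeff_mul_X_pow']

theorem coeff_mul_add_first (hG : IsReflectedFibPoly k G) (hk : 2 ≤ k) {r : ℕ} (hr : r < k)
    (q : ℕ) :
    (G ((q + 1) * k + r)).coeff (q * k + r) = (-1) ^ r * (Nat.choose 1 r : ℤ) := by
  induction q with
  | zero =>
    obtain _ | r := r
    · simp [hG.self]
    rw [show (0 + 1) * k + (r + 1) = r + 1 + k by ring, hG.coeff_add r.succ_pos,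
      hG.eq_zero _ r.succ_pos hr, if_neg (by omega), if_pos (by omega)]
    rcases Nat.eq_zero_or_pos r with rfl | hr₀
    · simp [hG.zero]
    · simp [hG.eq_zero r hr₀ (by omega), Nat.choose_eq_zero_of_lt (show 1 < r + 1 by omega)]
  | succ q ih =>
    have hqk : (q + 1) * k + r = q * k + r + k := by ring
    rw [show (q + 1 + 1) * k + r = (q + 1) * k + r + k by ring, hG.coeff_add (by omega),
      hG.coeff_self (by omega) (by omega), if_pos (by omega), if_pos (by omega),
      hG.coeff_self (by omega) (by omega), show (q + 1) * k + r - k = q * k + r by omega, ih]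
    ring

theorem coeff_mul_add (hG : IsReflectedFibPoly k G) {q r t : ℕ} (hr : r < k)
    (ht : t + 1 < r + k) (htq : t ≤ q) :
    (G ((q + 1) * k + r)).coeff ((q - t) * k + r) =
      (-1) ^ r * (q.choose t : ℤ) * ((t + 1).choose r : ℤ) := by
  have hk : 2 ≤ k := by omega
  induction q using Nat.strong_induction_on generalizing r t with
  | _ q ih =>
  obtain _ | s := t
  · simpa using hG.coeff_mul_add_first hk hr q
  obtain ⟨q, rfl⟩ : ∃ q', q = q' + 1 := ⟨q - 1, by omega⟩
  have hB : (if k ≤ (q - s) * k + r then (G ((q + 1) * k + r)).coeff ((q - s) * k + r - k)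
      else 0) = (-1) ^ r * (q.choose (s + 1) : ℤ) * ((s + 2).choose r : ℤ) := by
    rcases (Nat.lt_succ_iff.mp htq).lt_or_eq with hs | rfl
    · obtain ⟨u, rfl⟩ := Nat.exists_eq_add_of_lt hs
      rw [show s + u + 1 - s = u + 1 by omega, if_pos (by rw [add_mul]; omega),
        show (u + 1) * k + r - k = (s + u + 1 - (s + 1)) * k + r by
          rw [add_mul, show s + u + 1 - (s + 1) = u by omega]; omega,
        ih _ (by omega) hr (by omega) (by omega)]
    · rw [Nat.sub_self, if_neg (by omega), Nat.choose_succ_self]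
      simp
  rw [show (q + 1 + 1) * k + r = (q + 1) * k + r + k by ring, hG.coeff_add (by positivity),
    Nat.add_sub_add_right, ih q q.lt_succ_self hr (by omega) (by omega), hB]
  obtain _ | r := r
  · have hC : (if 1 ≤ (q - s) * k + 0 then
        (G ((q + 1) * k + 0 - 1)).coeff ((q - s) * k + 0 - 1) else 0) = 0 := by
      rcases (Nat.lt_succ_iff.mp htq).lt_or_eq with hs | rfl
      · obtain ⟨u, rfl⟩ := Nat.exists_eq_add_of_lt hs
        rw [if_pos (by rw [show s + u + 1 - s = u + 1 by omega, add_mul]; omega),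
          show (s + u + 1 + 1) * k + 0 - 1 = (s + u + 1) * k + (k - 1) by rw [add_mul]; omega,
          show (s + u + 1 - s) * k + 0 - 1 = (s + u - s) * k + (k - 1) by
            rw [show s + u + 1 - s = (s + u - s) + 1 by omega, add_mul]; omega,
          ih _ (by omega) (by omega) (by omega) (by omega),
          Nat.choose_eq_zero_of_lt (show s + 1 < k - 1 by omega)]
        simp
      · simp
    rw [hC, Nat.choose_succ_succ' q s]
    simp only [Nat.choose_zero_right]
    push_cast
    ring
  · rw [if_pos (by omega), show (q + 1) * k + (r + 1) - 1 = (q + 1) * k + r by omega,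
      show (q - s) * k + (r + 1) - 1 = (q - s) * k + r by omega,
      ih q q.lt_succ_self (by omega) (by omega) (by omega), Nat.choose_succ_succ' q s,
      Nat.choose_succ_succ' (s + 1) r]
    push_cast
    ring

theorem coeff_two_mul (hG : IsReflectedFibPoly 2 G) (q : ℕ) :
    (G ((q + 2) * 2)).coeff (q * 2) = 2 * q + 1 := by
  induction q with
  | zero => simp [show (0 + 2) * 2 = 2 + 2 by rfl, hG.coeff_add two_pos, hG.self]
  | succ q ih =>
    have hlead₀ := hG.coeff_mul_add_first le_rfl two_pos (q + 1)
    have hlead₁ := hG.coeff_mul_add_first le_rfl one_lt_two q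
    rw [add_zero, add_zero] at hlead₀
    rw [show (q + 1 + 2) * 2 = (q + 2) * 2 + 2 by ring, hG.coeff_add (by omega),
      show (q + 1) * 2 - 2 = q * 2 by omega, show (q + 2) * 2 - 1 = (q + 1) * 2 + 1 by omega,
      show (q + 1) * 2 - 1 = q * 2 + 1 by omega, hlead₀, hlead₁, ih,
      if_pos (by omega), if_pos (by omega), Nat.choose_self, Nat.choose_zero_right]
    push_cast
    ring

end IsReflectedFibPoly

/-- Second-highest coefficient of the `k`-generalized Fibonacci polynomial
for `n ≤ 0`: (i) if `r = 0` and `|n| ≥ 2k - 1`, the coefficient of `x^(|n|+1-2k)` equals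
`2q - 3` when `k = 2` and `q - 1` when `k ≥ 3`; (ii) if `1 ≤ r ≤ k-1` and `q ≥ r + 1`,
the coefficient of `x^(|n|+1-k(r+1))` equals `(-1)^r (r+1) C(q-1, r)`. -/
theorem fib_poly_second_highest_coeff_neg (k : ℕ) (hk : 2 ≤ k)
    (F : ℤ → Polynomial ℤ)
    (hrec : ∀ n : ℤ, F n = ∑ i ∈ Finset.range k, X ^ (k - 1 - i) * F (n - 1 - (i : ℤ)))
    (hF1 : F 1 = 1)
    (hF0 : ∀ m : ℕ, m ≤ k - 2 → F (-(m : ℤ)) = 0)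
    (n : ℤ) (hn : n ≤ 0) (q r : ℕ)
    (hq : q = ((-n).toNat + 1) / k)
    (hr : r = ((-n).toNat + 1) % k) :
    (r = 0 → 2 * k - 1 ≤ (-n).toNat → k = 2 →
      (F n).coeff ((-n).toNat + 1 - 2 * k) = 2 * (q : ℤ) - 3) ∧
    (r = 0 → 2 * k - 1 ≤ (-n).toNat → 3 ≤ k →
      (F n).coeff ((-n).toNat + 1 - 2 * k) = (q : ℤ) - 1) ∧
    (1 ≤ r → r + 1 ≤ q →
      (F n).coeff ((-n).toNat + 1 - k * (r + 1)) =
        (-1) ^ r * ((r : ℤ) + 1) * ((q - 1).choose r : ℤ)) := by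
  set G : ℕ → ℤ[X] := fun m => F (1 - m)
  have hG : IsReflectedFibPoly k G := isReflectedFibPoly (by omega) hrec hF1 hF0
  have hm : (-n).toNat + 1 = q * k + r := by rw [hq, hr, Nat.div_add_mod']
  have hFn : F n = G (q * k + r) := by simp only [G]; congr 1; omega
  have hrk : r < k := hr ▸ Nat.mod_lt _ (by omega)
  rw [hFn, hm]
  refine ⟨fun hr₀ hn₂ hk₂ => ?_, fun hr₀ hn₂ hk₃ => ?_, fun hr₁ hrq => ?_⟩
  · subst hr₀ hk₂
    obtain ⟨q, rfl⟩ : ∃ q', q = q' + 2 := ⟨q - 2, by omega⟩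
    rw [add_zero, show (q + 2) * 2 - 2 * 2 = q * 2 by omega, hG.coeff_two_mul]
    push_cast
    ring
  · subst hr₀
    have hq₂ : 2 ≤ q := Nat.le_of_mul_le_mul_right (show 2 * k ≤ q * k by omega) (by omega)
    obtain ⟨q, rfl⟩ : ∃ q', q = q' + 2 := ⟨q - 2, by omega⟩
    rw [show (q + 2) * k + 0 - 2 * k = (q + 1 - 1) * k + 0 by simp [add_mul],
      hG.coeff_mul_add (q := q + 1) (t := 1) hrk (by omega) (by omega),
      Nat.choose_one_right, Nat.choose_zero_right]
    push_cast
    ring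
  · obtain ⟨u, rfl⟩ : ∃ u, q = r + u + 1 := ⟨q - r - 1, by omega⟩
    rw [show (r + u + 1) * k + r - k * (r + 1) = (r + u - r) * k + r by
        rw [Nat.add_sub_cancel_left, Nat.sub_eq_iff_eq_add (by nlinarith)]; ring,
      hG.coeff_mul_add (q := r + u) (t := r) hrk (by omega) le_self_add, Nat.add_sub_cancel,
      Nat.choose_succ_self_right]
    push_cast
    ring
end

section
/- Let k ≥ 2 be an integer and n ∈ ℤ with 𝓕_{n,k} not the zero polynomial. Then (x^k + 1)^{ρ_{n,k}} divides 𝓕_{n,k}(x) in ℤ[x], while (x^k + 1)^{ρ_{n,k}+1} does not divide 𝓕_{n,k}(x). -/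
/-!
From the recurrence one gets `x 𝓕_{n+1} = (x^k + 1) 𝓕_n - 𝓕_{n-k}`. With `u = x^k + 1`, the
sequences `a_b = x^b 𝓕_{b+1}` and `N_b = 𝓕_{1-b}` therefore satisfy
`a_{b+k+1} = u a_{b+k} + (1 - u) a_b` (as `1 - u = -x^k`) and `N_{b+k+1} = u N_{b+1} - x N_b`.
Writing `b = q (k + 1) + r`, induction on `q` shows that each term is congruent modulo
`u^(ρ+1)` to `u^ρ` times a binomial coefficient (Pascal's rule drives the induction) times a
power of `x`. Since `u` is coprime to `x` and divides no nonzero integer,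
`ρ` is the exact multiplicity.
-/

open Polynomial

section Recurrence

variable {R : Type*} [CommRing R] {u v : R} {k : ℕ}

theorem dvd_apply_mul_sub_one {a : ℕ → R}
    (hrec : ∀ b, a (b + k + 1) = u * a (b + k) + (1 - u) * a b) (h0 : a 0 = 1) (q : ℕ) :
    u ∣ a (q * (k + 1)) - 1 := by
  induction q with
  | zero => simp [h0]
  | succ q ih =>
    have h : a ((q + 1) * (k + 1)) - 1 =
        u * (a (q * (k + 1) + k) - a (q * (k + 1))) + (a (q * (k + 1)) - 1) := by
      rw [show (q + 1) * (k + 1) = q * (k + 1) + k + 1 by ring, hrec]; ring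
    exact h ▸ dvd_add (dvd_mul_right _ _) ih

theorem pow_succ_dvd_apply_add_choose_mul_pow {a : ℕ → R}
    (hrec : ∀ b, a (b + k + 1) = u * a (b + k) + (1 - u) * a b)
    (hinit : ∀ s < k, a (s + 1) = (u - 1) * u ^ s) (q s : ℕ) (hs : s < k) :
    u ^ (s + 1) ∣ a (q * (k + 1) + s + 1) + (q + s).choose q * u ^ s := by
  induction q generalizing s with
  | zero =>
    refine ⟨1, ?_⟩
    simp only [zero_mul, zero_add, hinit s hs, Nat.choose_zero_right]
    push_cast; ring
  | succ q ihq =>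
    induction s with
    | zero =>
      suffices u ∣ a ((q + 1) * (k + 1) + 1) + 1 by simpa using this
      have h : a ((q + 1) * (k + 1) + 1) + 1 =
          u * (a ((q + 1) * (k + 1)) - a (q * (k + 1) + 1)) + (a (q * (k + 1) + 1) + 1) := by
        rw [show (q + 1) * (k + 1) + 1 = q * (k + 1) + 1 + k + 1 by ring, hrec,
          show q * (k + 1) + 1 + k = (q + 1) * (k + 1) by ring]
        ring
      exact h ▸ dvd_add (dvd_mul_right _ _) (by simpa using ihq 0 hs)
    | succ s ihs =>
      have h : a ((q + 1) * (k + 1) + (s + 1) + 1) + (q + 1 + (s + 1)).choose (q + 1) * u ^ (s + 1)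
          = u * (a ((q + 1) * (k + 1) + s + 1) + (q + 1 + s).choose (q + 1) * u ^ s) +
            (1 - u) * (a (q * (k + 1) + (s + 1) + 1) + (q + (s + 1)).choose q * u ^ (s + 1)) +
            u ^ (s + 2) * (q + (s + 1)).choose q := by
        rw [show (q + 1) * (k + 1) + (s + 1) + 1 = q * (k + 1) + (s + 1) + 1 + k + 1 by ring, hrec,
          show q * (k + 1) + (s + 1) + 1 + k = (q + 1) * (k + 1) + s + 1 by ring,
          show q + 1 + (s + 1) = q + (s + 1) + 1 by ring, Nat.choose_succ_succ,
          show q + 1 + s = q + (s + 1) by ring]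
        push_cast; ring
      rw [h]
      refine dvd_add (dvd_add ?_ (dvd_mul_of_dvd_right (ihq (s + 1) hs) _)) (dvd_mul_right _ _)
      exact pow_succ' u (s + 1) ▸ mul_dvd_mul_left u (ihs (by omega))

theorem dvd_apply_mul_sub_pow {N : ℕ → R}
    (hrec : ∀ b, N (b + k + 1) = u * N (b + 1) + v * N b) (h0 : N 0 = 1) (q : ℕ) :
    u ∣ N (q * (k + 1)) - v ^ q := by
  induction q with
  | zero => simp [h0]
  | succ q ih =>
    have h : N ((q + 1) * (k + 1)) - v ^ (q + 1) =
        u * N (q * (k + 1) + 1) + v * (N (q * (k + 1)) - v ^ q) := by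
      rw [show (q + 1) * (k + 1) = q * (k + 1) + k + 1 by ring, hrec]; ring
    exact h ▸ dvd_add (dvd_mul_right _ _) (dvd_mul_of_dvd_right ih _)

theorem apply_mul_add_eq_zero {N : ℕ → R}
    (hrec : ∀ b, N (b + k + 1) = u * N (b + 1) + v * N b)
    (hzero : ∀ r, 0 < r → r < k → N r = 0) (q r : ℕ) (hr : 0 < r) (hqr : q + r < k) :
    N (q * (k + 1) + r) = 0 := by
  induction q generalizing r with
  | zero => simpa using hzero r hr (by omega)
  | succ q ih =>
    rw [show (q + 1) * (k + 1) + r = q * (k + 1) + r + k + 1 by ring, hrec, add_assoc,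
      ih (r + 1) (by omega) (by omega), ih r hr (by omega), mul_zero, mul_zero, add_zero]

-- The leading term of `N (q * (k + 1) + (k - ρ))` is `q.choose ρ * v ^ (q - ρ) * u ^ ρ`;
-- multiplying by `v ^ ρ` avoids the truncated subtraction.
theorem pow_succ_dvd_pow_mul_apply_sub {N : ℕ → R}
    (hrec : ∀ b, N (b + k + 1) = u * N (b + 1) + v * N b)
    (hzero : ∀ r, 0 < r → r < k → N r = 0) (hk : N k = 1) (q ρ : ℕ) (hρ : ρ < k) :
    u ^ (ρ + 1) ∣ v ^ ρ * N (q * (k + 1) + (k - ρ)) - q.choose ρ * v ^ q * u ^ ρ := by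
  induction q generalizing ρ with
  | zero =>
    cases ρ with
    | zero => simp [hk]
    | succ ρ => simp [hzero (k - (ρ + 1)) (by omega) (by omega)]
  | succ q ih =>
    rw [show (q + 1) * (k + 1) + (k - ρ) = q * (k + 1) + (k - ρ) + k + 1 by ring, hrec]
    cases ρ with
    | zero =>
      suffices u ∣ u * N (q * (k + 1) + k + 1) + v * N (q * (k + 1) + k) - v ^ (q + 1) by
        simpa using this
      have h : u * N (q * (k + 1) + k + 1) + v * N (q * (k + 1) + k) - v ^ (q + 1) =
          u * N (q * (k + 1) + k + 1) + v * (N (q * (k + 1) + k) - v ^ q) := by ring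
      exact h ▸ dvd_add (dvd_mul_right _ _) (dvd_mul_of_dvd_right (by simpa using ih 0 hρ) _)
    | succ ρ =>
      have h : v ^ (ρ + 1) * (u * N (q * (k + 1) + (k - (ρ + 1)) + 1) +
            v * N (q * (k + 1) + (k - (ρ + 1)))) -
            (q + 1).choose (ρ + 1) * v ^ (q + 1) * u ^ (ρ + 1)
          = u * v * (v ^ ρ * N (q * (k + 1) + (k - ρ)) - q.choose ρ * v ^ q * u ^ ρ) +
            v * (v ^ (ρ + 1) * N (q * (k + 1) + (k - (ρ + 1))) -
              q.choose (ρ + 1) * v ^ q * u ^ (ρ + 1)) := by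
        rw [show q * (k + 1) + (k - (ρ + 1)) + 1 = q * (k + 1) + (k - ρ) by omega,
          Nat.choose_succ_succ]
        push_cast; ring
      rw [h]
      refine dvd_add ?_ (dvd_mul_of_dvd_right (ih (ρ + 1) hρ) _)
      exact pow_succ' u (ρ + 1) ▸ mul_assoc u v _ ▸ mul_dvd_mul_left u
        (dvd_mul_of_dvd_right (ih ρ (by omega)) v)

end Recurrence

theorem isCoprime_pow_add_one_self {R : Type*} [CommRing R] {k : ℕ} (hk : 0 < k) (x : R) :
    IsCoprime (x ^ k + 1) x :=
  ⟨1, -x ^ (k - 1), by rw [neg_mul, ← pow_succ, Nat.sub_add_cancel hk]; ring⟩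

theorem emultiplicity_eq_of_pow_succ_dvd_mul_sub {R : Type*} [CommRing R] [IsDomain R]
    {u x g r : R} {ρ : ℕ} (hu : u ≠ 0) (hx : IsCoprime u x) (hr : ¬ u ∣ r)
    (h : u ^ (ρ + 1) ∣ x * g - r * u ^ ρ) : emultiplicity u g = ρ := by
  rw [emultiplicity_eq_coe]
  have hxg : u ^ ρ ∣ x * g :=
    sub_add_cancel (x * g) (r * u ^ ρ) ▸
      dvd_add ((pow_dvd_pow u ρ.le_succ).trans h) (dvd_mul_left _ _)
  refine ⟨hx.pow_left.dvd_of_dvd_mul_left hxg, fun hg => hr ?_⟩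
  have hru : u ^ ρ * u ∣ u ^ ρ * r := by
    rw [← pow_succ, mul_comm, ← sub_sub_cancel (x * g) (r * u ^ ρ)]
    exact dvd_sub (dvd_mul_of_dvd_right hg x) h
  exact (mul_dvd_mul_iff_left (pow_ne_zero ρ hu)).mp hru

namespace Polynomial

theorem X_pow_add_one_ne_zero {k : ℕ} (hk : 0 < k) : (X ^ k + 1 : ℤ[X]) ≠ 0 := by
  simpa using X_pow_add_C_ne_zero hk (1 : ℤ)

theorem X_pow_add_one_not_dvd_intCast {k : ℕ} (hk : 0 < k) {c : ℤ} (hc : c ≠ 0) :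
    ¬ (X ^ k + 1 : ℤ[X]) ∣ (c : ℤ[X]) := by
  intro h
  have := natDegree_le_of_dvd h (Int.cast_ne_zero.mpr hc)
  rw [natDegree_intCast, ← C_1, natDegree_X_pow_add_C] at this
  omega

end Polynomial

theorem Int.add_mul_emod_add_one_emod {k r : ℤ} (t : ℤ) (h0 : 0 ≤ r) (hr : r ≤ k) :
    (r + (k + 1) * t) % (k + 1) % k = r % k := by
  rw [Int.add_mul_emod_self_left, Int.emod_eq_of_lt h0 (by omega)]

structure IsGenFibSeq {R : Type*} [CommRing R] (k : ℕ) (x : R) (F : ℤ → R) : Prop where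
  eq_sum : ∀ n : ℤ, F n = ∑ i ∈ Finset.range k, x ^ (k - 1 - i) * F (n - 1 - (i : ℤ))
  one : F 1 = 1
  zero : ∀ m : ℕ, m ≤ k - 2 → F (-(m : ℤ)) = 0

namespace IsGenFibSeq

section CommRing

variable {R : Type*} [CommRing R] {k : ℕ} {x : R} {F : ℤ → R}

theorem mul_apply_add_one (hF : IsGenFibSeq k x F) (hk : 0 < k) (n : ℤ) :
    x * F (n + 1) = (x ^ k + 1) * F n - F (n - k) := by
  obtain ⟨K, rfl⟩ : ∃ K, k = K + 1 := ⟨k - 1, by omega⟩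
  -- the expansions of `x F(n+1)` and `F n` share all terms but one each
  have hsucc := hF.eq_sum (n + 1)
  have hn := hF.eq_sum n
  rw [Finset.sum_range_succ'] at hsucc
  rw [Finset.sum_range_succ] at hn
  have hshift : ∀ i ∈ Finset.range K,
      x * (x ^ (K + 1 - 1 - (i + 1)) * F (n + 1 - 1 - ((i + 1 : ℕ) : ℤ))) =
        x ^ (K + 1 - 1 - i) * F (n - 1 - (i : ℤ)) := by
    intro i hi
    have := Finset.mem_range.mp hi
    rw [← mul_assoc, ← pow_succ', show K + 1 - 1 - (i + 1) + 1 = K + 1 - 1 - i by omega]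
    congr 2; push_cast; ring
  rw [hsucc, mul_add, Finset.mul_sum, Finset.sum_congr rfl hshift]
  simp only [Nat.add_sub_cancel, Nat.sub_zero, Nat.sub_self, pow_zero, one_mul,
    Nat.cast_zero, sub_zero, add_sub_cancel_right] at hn ⊢
  rw [show n - 1 - K = n - (K + 1 : ℕ) by push_cast; ring] at hn
  linear_combination -hn

theorem apply_one_sub (hF : IsGenFibSeq k x F) (hk : 0 < k) : F (1 - k) = 1 := by
  obtain ⟨K, rfl⟩ : ∃ K, k = K + 1 := ⟨k - 1, by omega⟩
  have h := hF.eq_sum 1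
  rw [Finset.sum_range_succ, Finset.sum_eq_zero fun i hi => ?_] at h
  · rw [hF.one, Nat.add_sub_cancel, Nat.sub_self, pow_zero, one_mul, zero_add] at h
    rw [h]; congr 1; push_cast; ring
  · rw [show (1 : ℤ) - 1 - i = -(i : ℤ) by ring, hF.zero i (by have := Finset.mem_range.mp hi; omega),
      mul_zero]

theorem pow_mul_apply_add_one_rec (hF : IsGenFibSeq k x F) (hk : 0 < k) (b : ℕ) :
    x ^ (b + k + 1) * F ((b + k + 1 : ℕ) + 1) =
      (x ^ k + 1) * (x ^ (b + k) * F ((b + k : ℕ) + 1)) +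
        (1 - (x ^ k + 1)) * (x ^ b * F (b + 1)) := by
  have h := hF.mul_apply_add_one hk ((b + k : ℕ) + 1)
  rw [show ((b + k : ℕ) : ℤ) + 1 - k = b + 1 by push_cast; ring] at h
  rw [show ((b + k + 1 : ℕ) : ℤ) + 1 = (b + k : ℕ) + 1 + 1 by push_cast; ring, pow_succ,
    mul_assoc, h]
  ring

theorem pow_mul_apply_add_one_init (hF : IsGenFibSeq k x F) (hk : 0 < k) :
    ∀ s < k, x ^ (s + 1) * F ((s + 1 : ℕ) + 1) = (x ^ k + 1 - 1) * (x ^ k + 1) ^ s := by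
  intro s hs
  induction s with
  | zero =>
    have h := hF.mul_apply_add_one hk 1
    rw [hF.one, hF.apply_one_sub hk] at h
    simpa [one_add_one_eq_two] using h
  | succ s ih =>
    have h := hF.mul_apply_add_one hk ((s + 1 : ℕ) + 1)
    rw [show ((s + 1 : ℕ) : ℤ) + 1 - k = -((k - (s + 2) : ℕ) : ℤ) by omega,
      hF.zero _ (by omega), sub_zero] at h
    rw [pow_succ, mul_assoc,
      show ((s + 1 + 1 : ℕ) : ℤ) + 1 = (s + 1 : ℕ) + 1 + 1 by push_cast; ring, h]
    linear_combination (x ^ k + 1) * ih (by omega)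

theorem apply_one_sub_rec (hF : IsGenFibSeq k x F) (hk : 0 < k) (b : ℕ) :
    F (1 - (b + k + 1 : ℕ)) = (x ^ k + 1) * F (1 - (b + 1 : ℕ)) + (-x) * F (1 - b) := by
  have h := hF.mul_apply_add_one hk (-b)
  rw [show (1 : ℤ) - (b + k + 1 : ℕ) = -b - k by push_cast; ring,
    show (1 : ℤ) - (b + 1 : ℕ) = -b by push_cast; ring, show (1 : ℤ) - b = -b + 1 by ring]
  linear_combination h

theorem apply_one_sub_eq_zero (hF : IsGenFibSeq k x F) (r : ℕ) (hr : 0 < r) (hrk : r < k) :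
    F (1 - r) = 0 := by
  rw [show (1 : ℤ) - r = -((r - 1 : ℕ) : ℤ) by omega]
  exact hF.zero _ (by omega)

theorem apply_one_sub_mul_add_eq_zero
    (hF : IsGenFibSeq k x F) (hk : 0 < k) (q ρ : ℕ) (hρ : ρ < k) (hqρ : q < ρ) :
    F (1 - (q * (k + 1) + (k - ρ) : ℕ)) = 0 :=
  apply_mul_add_eq_zero (N := fun b => F (1 - b)) (hF.apply_one_sub_rec hk)
    (hF.apply_one_sub_eq_zero) q (k - ρ) (by omega) (by omega)

end CommRing

variable {k : ℕ} {F : ℤ → ℤ[X]}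

theorem emultiplicity_apply_mul_add_one (hF : IsGenFibSeq k X F) (hk : 0 < k) (q : ℕ) :
    emultiplicity (X ^ k + 1) (F ((q * (k + 1) : ℕ) + 1)) = 0 := by
  refine emultiplicity_eq_of_pow_succ_dvd_mul_sub (x := X ^ (q * (k + 1))) (r := 1)
    (X_pow_add_one_ne_zero hk) (isCoprime_pow_add_one_self hk X).pow_right ?_ ?_
  · exact_mod_cast X_pow_add_one_not_dvd_intCast hk one_ne_zero
  · simpa using dvd_apply_mul_sub_one (a := fun b => X ^ b * F (b + 1))
      (hF.pow_mul_apply_add_one_rec hk) (by simpa using hF.one) q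

theorem emultiplicity_apply_mul_add_add_two (hF : IsGenFibSeq k X F) (hk : 0 < k) (q s : ℕ)
    (hs : s < k) : emultiplicity (X ^ k + 1) (F ((q * (k + 1) + s + 1 : ℕ) + 1)) = s := by
  refine emultiplicity_eq_of_pow_succ_dvd_mul_sub (x := X ^ (q * (k + 1) + s + 1))
    (r := -(((q + s).choose q : ℤ) : ℤ[X]))
    (X_pow_add_one_ne_zero hk) (isCoprime_pow_add_one_self hk X).pow_right ?_ ?_
  · exact dvd_neg.not.mpr (X_pow_add_one_not_dvd_intCast hk
      (by exact_mod_cast (Nat.choose_pos (Nat.le_add_right q s)).ne'))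
  · rw [neg_mul, sub_neg_eq_add]
    exact_mod_cast pow_succ_dvd_apply_add_choose_mul_pow (a := fun b => X ^ b * F (b + 1))
      (hF.pow_mul_apply_add_one_rec hk) (hF.pow_mul_apply_add_one_init hk) q s hs

theorem emultiplicity_apply_one_sub_mul (hF : IsGenFibSeq k X F) (hk : 0 < k) (q : ℕ) :
    emultiplicity (X ^ k + 1) (F (1 - (q * (k + 1) : ℕ))) = 0 := by
  have hcop := (isCoprime_pow_add_one_self hk (X : ℤ[X])).neg_right.pow_right (n := q)
  refine emultiplicity_eq_of_pow_succ_dvd_mul_sub (x := 1) (r := (-X) ^ q)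
    (X_pow_add_one_ne_zero hk) isCoprime_one_right (fun h => ?_) ?_
  · exact X_pow_add_one_not_dvd_intCast hk one_ne_zero
      (by exact_mod_cast isUnit_iff_dvd_one.mp (hcop.isUnit_of_dvd h))
  · simpa using dvd_apply_mul_sub_pow (N := fun b => F (1 - b))
      (hF.apply_one_sub_rec hk) (by simpa using hF.one) q

theorem emultiplicity_apply_one_sub_mul_add (hF : IsGenFibSeq k X F) (hk : 0 < k) (q ρ : ℕ)
    (hρ : ρ < k) (hρq : ρ ≤ q) :
    emultiplicity (X ^ k + 1) (F (1 - (q * (k + 1) + (k - ρ) : ℕ))) = ρ := by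
  have hcop := (isCoprime_pow_add_one_self hk (X : ℤ[X])).neg_right
  refine emultiplicity_eq_of_pow_succ_dvd_mul_sub (x := (-X) ^ ρ)
    (r := ((q.choose ρ : ℤ) : ℤ[X]) * (-X) ^ q)
    (X_pow_add_one_ne_zero hk) hcop.pow_right (fun h => ?_) ?_
  · exact X_pow_add_one_not_dvd_intCast hk (by exact_mod_cast (Nat.choose_pos hρq).ne')
      (hcop.pow_right.dvd_of_dvd_mul_right h)
  · exact_mod_cast pow_succ_dvd_pow_mul_apply_sub (N := fun b => F (1 - b))
      (hF.apply_one_sub_rec hk) hF.apply_one_sub_eq_zero (by simpa using hF.apply_one_sub hk)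
      q ρ hρ

theorem emultiplicity_of_pos (hF : IsGenFibSeq k X F) (hk : 0 < k) {n : ℤ} (hn : 0 < n)
    {ρ : ℕ} (hρ : (ρ : ℤ) = (n - 2) % (k + 1) % k) :
    emultiplicity (X ^ k + 1) (F n) = ρ := by
  obtain ⟨q, r, hr, rfl⟩ : ∃ q r : ℕ, r < k + 1 ∧ n = (q * (k + 1) + r : ℕ) + 1 :=
    ⟨(n - 1).toNat / (k + 1), (n - 1).toNat % (k + 1), Nat.mod_lt _ (by omega),
      by rw [Nat.div_add_mod']; omega⟩
  rcases r with _ | s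
  · rw [show ((q * (k + 1) + 0 : ℕ) : ℤ) + 1 - 2 = k + (k + 1) * (q - 1) by push_cast; ring,
      Int.add_mul_emod_add_one_emod _ (by omega) le_rfl, Int.emod_self, Nat.cast_eq_zero] at hρ
    rw [hρ]
    exact hF.emultiplicity_apply_mul_add_one hk q
  · rw [show ((q * (k + 1) + (s + 1) : ℕ) : ℤ) + 1 - 2 = s + (k + 1) * q by push_cast; ring,
      Int.add_mul_emod_add_one_emod _ (by omega) (by omega),
      Int.emod_eq_of_lt (by omega) (by omega), Nat.cast_inj] at hρ
    rw [hρ, ← add_assoc]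
    exact hF.emultiplicity_apply_mul_add_add_two hk q s (by omega)

theorem emultiplicity_of_nonpos (hF : IsGenFibSeq k X F) (hk : 0 < k) {n : ℤ} (hn : n ≤ 0)
    {ρ : ℕ} (hρ : (ρ : ℤ) = (k * (-n) - 2) % (k + 1) % k) (hne : F n ≠ 0) :
    emultiplicity (X ^ k + 1) (F n) = ρ := by
  obtain ⟨q, r, hr, rfl⟩ : ∃ q r : ℕ, r < k + 1 ∧ n = 1 - (q * (k + 1) + r : ℕ) :=
    ⟨(1 - n).toNat / (k + 1), (1 - n).toNat % (k + 1), Nat.mod_lt _ (by omega),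
      by rw [Nat.div_add_mod']; omega⟩
  rcases r with _ | r
  · rw [show (k : ℤ) * -(1 - ((q * (k + 1) + 0 : ℕ) : ℤ)) - 2 = k + (k + 1) * (k * q - 2) by
        push_cast; ring,
      Int.add_mul_emod_add_one_emod _ (by omega) le_rfl, Int.emod_self, Nat.cast_eq_zero] at hρ
    rw [hρ]
    exact hF.emultiplicity_apply_one_sub_mul hk q
  · rw [show (k : ℤ) * -(1 - ((q * (k + 1) + (r + 1) : ℕ) : ℤ)) - 2 =
        (k - (r + 1) : ℕ) + (k + 1) * (k * q + r - 1) by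
          push_cast [Nat.cast_sub (by omega : r + 1 ≤ k)]; ring,
      Int.add_mul_emod_add_one_emod _ (by omega) (by omega),
      Int.emod_eq_of_lt (by omega) (by omega), Nat.cast_inj] at hρ
    rw [show q * (k + 1) + (r + 1) = q * (k + 1) + (k - ρ) by omega] at hne ⊢
    rcases le_or_gt ρ q with hq | hq
    · exact hF.emultiplicity_apply_one_sub_mul_add hk q ρ (by omega) hq
    · exact absurd (hF.apply_one_sub_mul_add_eq_zero hk q ρ (by omega) hq) hne

end IsGenFibSeq

/-- If `F n` is not the zero polynomial, then `(x^k + 1)^ρ` divides `F n`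
while `(x^k + 1)^(ρ+1)` does not, where `ρ = ρ_{n,k}`. -/
theorem fib_poly_xk_plus_one_multiplicity (k : ℕ) (hk : 2 ≤ k)
    (F : ℤ → Polynomial ℤ)
    (hrec : ∀ n : ℤ, F n = ∑ i ∈ Finset.range k, X ^ (k - 1 - i) * F (n - 1 - (i : ℤ)))
    (hF1 : F 1 = 1)
    (hF0 : ∀ m : ℕ, m ≤ k - 2 → F (-(m : ℤ)) = 0)
    (n : ℤ) (ρ : ℕ)
    (hρ : (ρ : ℤ) = if 0 < n then ((n - 2) % ((k : ℤ) + 1)) % (k : ℤ)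
                    else (((k : ℤ) * (-n) - 2) % ((k : ℤ) + 1)) % (k : ℤ))
    (hne : F n ≠ 0) :
    (X ^ k + 1) ^ ρ ∣ F n ∧ ¬ (X ^ k + 1) ^ (ρ + 1) ∣ F n := by
  have hF : IsGenFibSeq k X F := ⟨hrec, hF1, hF0⟩
  rw [← emultiplicity_eq_coe]
  split_ifs at hρ with hn
  · exact hF.emultiplicity_of_pos (by omega) hn hρ
  · exact hF.emultiplicity_of_nonpos (by omega) (not_lt.mp hn) hρ hne
end

section
/- Let k ≥ 2 be an integer. For every integer n with 2 ≤ n ≤ k + 1, the k-generalized Fibonacci polynomial satisfies 𝓕_{n,k}(x) = x^{k+1−n} · (x^k + 1)^{n−2}. -/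
/-!
Comparing `x` times the recurrence at `n + 1` with the recurrence at `n` telescopes to
`x · F (n + 1) + F (n - k) = (x ^ k + 1) · F n`. For `2 ≤ n ≤ k` the index `n - k` lies among the
initial zeros, so `x · F (n + 1) = (x ^ k + 1) · F n`; starting from `F 2 = x ^ (k - 1)` and
cancelling `x` gives the closed form by induction.
-/

open Polynomial Finset

namespace GenFib

variable {R : Type*} [CommRing R] {x : R} {k : ℕ} {F : ℤ → R}

def SatisfiesRecurrence (x : R) (k : ℕ) (F : ℤ → R) : Prop :=
  ∀ n : ℤ, F n = ∑ i ∈ range k, x ^ (k - 1 - i) * F (n - 1 - (i : ℤ))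

theorem mul_succ_add_sub_eq (hrec : SatisfiesRecurrence x k F) (n : ℤ) :
    x * F (n + 1) + F (n - k) = (x ^ k + 1) * F n := by
  obtain _ | m := k
  · have hzero : ∀ n, F n = 0 := by simpa [SatisfiesRecurrence] using hrec
    simp [hzero]
  have hnext : F (n + 1) = x ^ m * F n + ∑ i ∈ range m, x ^ (m - 1 - i) * F (n - 1 - i) := by
    rw [hrec, sum_range_succ', add_comm]
    congr 1
    · simp
    · refine sum_congr rfl fun i _ => ?_
      congr 2 <;> push_cast <;> omega
  have hcur : F n = ∑ i ∈ range m, x ^ (m - i) * F (n - 1 - i) + F (n - (m + 1 : ℕ)) := by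
    simp only [hrec n, sum_range_succ, Nat.add_sub_cancel, Nat.sub_self, pow_zero, one_mul]
    congr 2
    push_cast
    ring
  have hshift : x * ∑ i ∈ range m, x ^ (m - 1 - i) * F (n - 1 - i)
      = ∑ i ∈ range m, x ^ (m - i) * F (n - 1 - i) := by
    rw [mul_sum]
    refine sum_congr rfl fun i hi => ?_
    rw [← mul_assoc, ← pow_succ']
    congr 2
    have := mem_range.1 hi
    omega
  rw [hnext, mul_add, hshift]
  linear_combination -hcur

theorem apply_two (hk : 1 ≤ k) (hrec : SatisfiesRecurrence x k F) (hF1 : F 1 = 1)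
    (hF0 : ∀ m : ℕ, m ≤ k - 2 → F (-(m : ℤ)) = 0) :
    F 2 = x ^ (k - 1) := by
  obtain ⟨m, rfl⟩ : ∃ m, k = m + 1 := ⟨k - 1, by omega⟩
  rw [hrec, sum_range_succ']
  have hinit : ∀ i ∈ range m, x ^ (m + 1 - 1 - (i + 1)) * F (2 - 1 - (i + 1 : ℕ)) = 0 := by
    intro i hi
    have hi := mem_range.1 hi
    rw [show (2 - 1 - (i + 1 : ℕ) : ℤ) = -(i : ℤ) by push_cast; ring, hF0 i (by omega), mul_zero]
  rw [sum_eq_zero hinit]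
  simp [hF1]

theorem apply_eq_pow_mul_pow (hx : IsLeftRegular x) (hrec : SatisfiesRecurrence x k F)
    (hF1 : F 1 = 1) (hF0 : ∀ m : ℕ, m ≤ k - 2 → F (-(m : ℤ)) = 0)
    {n : ℕ} (hn : 2 ≤ n) (hnk : n ≤ k + 1) :
    F n = x ^ (k + 1 - n) * (x ^ k + 1) ^ (n - 2) := by
  induction n, hn using Nat.le_induction with
  | base =>
    rw [Nat.cast_ofNat, apply_two (by omega) hrec hF1 hF0, show k + 1 - 2 = k - 1 by omega]
    simp
  | succ n hn ih =>
    have hvanish : F (n - k) = 0 := by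
      rw [show (n - k : ℤ) = -((k - n : ℕ) : ℤ) by push_cast [show n ≤ k by omega]; ring]
      exact hF0 _ (by omega)
    apply hx
    have hstep := mul_succ_add_sub_eq hrec n
    rw [hvanish, add_zero, ih (by omega)] at hstep
    push_cast
    rw [hstep, show k + 1 - n = (k - n) + 1 by omega, show n - 1 = (n - 2) + 1 by omega]
    ring

end GenFib

theorem fib_poly_small_index_factored_general (k : ℕ)
    (F : ℤ → Polynomial ℤ)
    (hrec : ∀ n : ℤ, F n = ∑ i ∈ Finset.range k, X ^ (k - 1 - i) * F (n - 1 - (i : ℤ)))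
    (hF1 : F 1 = 1)
    (hF0 : ∀ m : ℕ, m ≤ k - 2 → F (-(m : ℤ)) = 0) :
    ∀ n : ℕ, 2 ≤ n → n ≤ k + 1 →
      F (n : ℤ) = X ^ (k + 1 - n) * (X ^ k + 1) ^ (n - 2) :=
  fun _ hn hnk => GenFib.apply_eq_pow_mul_pow isRegular_X.left hrec hF1 hF0 hn hnk

/-- For `2 ≤ n ≤ k + 1`, the `k`-generalized Fibonacci polynomial satisfies
`F n = x^(k+1-n) · (x^k + 1)^(n-2)`. -/
theorem fib_poly_small_index_factored (k : ℕ) (hk : 2 ≤ k)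
    (F : ℤ → Polynomial ℤ)
    (hrec : ∀ n : ℤ, F n = ∑ i ∈ Finset.range k, X ^ (k - 1 - i) * F (n - 1 - (i : ℤ)))
    (hF1 : F 1 = 1)
    (hF0 : ∀ m : ℕ, m ≤ k - 2 → F (-(m : ℤ)) = 0) :
    ∀ n : ℕ, 2 ≤ n → n ≤ k + 1 →
      F (n : ℤ) = X ^ (k + 1 - n) * (X ^ k + 1) ^ (n - 2) :=
  fib_poly_small_index_factored_general k F hrec hF1 hF0
end

section
/- Let k ≥ 3 be an integer. (i) For every integer s with 1 ≤ s ≤ k − 2, 𝓕_{−(sk−1),k}(x) = (x^k + 1)^{s−1}. (ii) For every integer s with 0 ≤ s ≤ k − 2, 𝓕_{−(s(k+1)−1),k}(x) = (−1)^s · x^s. -/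
/-!
Subtracting the recurrence at `n` from `x` times the recurrence at `n + 1` leaves the three-term
relation `x F(n+1) + F(n-k) = (x^k + 1) F(n)`. For `g m = F(1 - m)` it reads
`g(m + 1 + k) = (x^k + 1) g(m + 1) - x g(m)`, so every entry of the block `g(s k + j)`,
`0 ≤ j < k`, comes from two entries of the previous block. Starting from the block `1, 0, …, 0`,
block `s` vanishes beyond `j = s`. In particular its last entry is `0`, so
`g((s+1) k) = (x^k + 1) g(s k)`, and its entry at `j = s + 1` is `0`, so
`g((s+1)(k+1)) = -x g(s(k+1))`.
-/

open Polynomial Finset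

theorem mul_apply_add_one_add_apply_sub {R : Type*} [CommRing R] (x : R) {k : ℕ} (hk : k ≠ 0)
    {F : ℤ → R} (hrec : ∀ n : ℤ, F n = ∑ i ∈ range k, x ^ (k - 1 - i) * F (n - 1 - (i : ℤ)))
    (n : ℤ) : x * F (n + 1) + F (n - k) = (x ^ k + 1) * F n := by
  obtain ⟨m, rfl⟩ : ∃ m, k = m + 1 := ⟨k - 1, by omega⟩
  have hnext := hrec (n + 1)
  have hcur := hrec n
  rw [sum_range_succ'] at hnext
  rw [sum_range_succ] at hcur
  have hshift : x * ∑ i ∈ range m, x ^ (m + 1 - 1 - (i + 1)) * F (n + 1 - 1 - ((i + 1 : ℕ) : ℤ))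
      = ∑ i ∈ range m, x ^ (m + 1 - 1 - i) * F (n - 1 - (i : ℤ)) := by
    rw [mul_sum]
    refine sum_congr rfl fun i hi => ?_
    rw [← mul_assoc, ← pow_succ', show m + 1 - 1 - (i + 1) + 1 = m + 1 - 1 - i by
      rw [mem_range] at hi; omega]
    congr 2
    push_cast
    ring
  simp only [Nat.add_sub_cancel, Nat.sub_self, pow_zero, one_mul, Nat.cast_zero, sub_zero,
    add_sub_cancel_right, Nat.cast_add, Nat.cast_one] at hnext hcur hshift ⊢
  rw [show n - 1 - (m : ℤ) = n - (m + 1) by ring] at hcur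
  linear_combination x * hnext - hcur + hshift

theorem apply_one_sub_add_one_add {R : Type*} [CommRing R] (x : R) {k : ℕ} (hk : k ≠ 0)
    {F : ℤ → R} (hrec : ∀ n : ℤ, F n = ∑ i ∈ range k, x ^ (k - 1 - i) * F (n - 1 - (i : ℤ)))
    (n : ℕ) :
    F (1 - (n + 1 + k : ℕ)) = (x ^ k + 1) * F (1 - (n + 1 : ℕ)) - x * F (1 - n) := by
  have h := mul_apply_add_one_add_apply_sub x hk hrec (-n)
  push_cast
  rw [show (1 : ℤ) - (n + 1 + k) = -n - k by ring, show (1 : ℤ) - (n + 1) = -n by ring,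
    show (1 : ℤ) - n = -n + 1 by ring]
  linear_combination h

theorem apply_one_sub_eq_apply_one {R : Type*} [CommRing R] (x : R) {k : ℕ} (hk : k ≠ 0)
    {F : ℤ → R} (hrec : ∀ n : ℤ, F n = ∑ i ∈ range k, x ^ (k - 1 - i) * F (n - 1 - (i : ℤ)))
    (hF0 : ∀ m : ℕ, m ≤ k - 2 → F (-(m : ℤ)) = 0) :
    F (1 - k) = F 1 := by
  rw [hrec 1, sum_eq_single (k - 1)]
  · rw [Nat.sub_self, pow_zero, one_mul]
    congr 1
    omega
  · intro i hi hik
    rw [mem_range] at hi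
    rw [show (1 : ℤ) - 1 - i = -(i : ℤ) by ring, hF0 i (by omega), mul_zero]
  · simp only [mem_range]
    omega

section Blocks

variable {R : Type*} [CommRing R] {x : R} {k : ℕ} {g : ℕ → R}

theorem apply_mul_add_eq_zero_s18 (hg : ∀ n, g (n + 1 + k) = (x ^ k + 1) * g (n + 1) - x * g n)
    (hzero : ∀ j, 1 ≤ j → j < k → g j = 0) {s j : ℕ} (hsj : s < j) (hjk : j < k) :
    g (s * k + j) = 0 := by
  induction s generalizing j with
  | zero => simpa using hzero j (by omega) hjk
  | succ s ih =>
    obtain ⟨j, rfl⟩ : ∃ j', j = j' + 1 := ⟨j - 1, by omega⟩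
    rw [show (s + 1) * k + (j + 1) = s * k + j + 1 + k by ring, hg, add_assoc,
      ih (by omega) hjk, ih (by omega) (by omega)]
    ring

theorem apply_mul_add_self (hg : ∀ n, g (n + 1 + k) = (x ^ k + 1) * g (n + 1) - x * g n)
    (hzero : ∀ j, 1 ≤ j → j < k → g j = 0) (hg0 : g 0 = 1) {s : ℕ} (hs : s < k) :
    g (s * k + s) = (-x) ^ s := by
  induction s with
  | zero => simpa using hg0
  | succ s ih =>
    rw [show (s + 1) * k + (s + 1) = s * k + s + 1 + k by ring, hg, add_assoc,
      apply_mul_add_eq_zero_s18 hg hzero (Nat.lt_succ_self s) hs, ih (by omega)]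
    ring

theorem apply_succ_mul (hg : ∀ n, g (n + 1 + k) = (x ^ k + 1) * g (n + 1) - x * g n)
    (hzero : ∀ j, 1 ≤ j → j < k → g j = 0) (hgk : g k = 1) {s : ℕ} (hs : s + 1 < k) :
    g ((s + 1) * k) = (x ^ k + 1) ^ s := by
  induction s with
  | zero => simpa using hgk
  | succ s ih =>
    rw [show (s + 1 + 1) * k = s * k + (k - 1) + 1 + k by rw [add_mul, add_mul]; omega, hg,
      show s * k + (k - 1) + 1 = (s + 1) * k by rw [add_mul]; omega, ih (by omega),
      apply_mul_add_eq_zero_s18 hg hzero (by omega : s < k - 1) (by omega)]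
    ring

end Blocks

/-- For `k ≥ 3`: (i) for `1 ≤ s ≤ k-2`, `F(-(sk-1)) = (x^k+1)^(s-1)`;
(ii) for `0 ≤ s ≤ k-2`, `F(-(s(k+1)-1)) = (-1)^s x^s`. -/
theorem fib_poly_block_boundaries (k : ℕ) (hk : 3 ≤ k)
    (F : ℤ → Polynomial ℤ)
    (hrec : ∀ n : ℤ, F n = ∑ i ∈ Finset.range k, X ^ (k - 1 - i) * F (n - 1 - (i : ℤ)))
    (hF1 : F 1 = 1)
    (hF0 : ∀ m : ℕ, m ≤ k - 2 → F (-(m : ℤ)) = 0) :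
    (∀ s : ℕ, 1 ≤ s → s ≤ k - 2 →
      F (-((s : ℤ) * k - 1)) = (X ^ k + 1) ^ (s - 1)) ∧
    (∀ s : ℕ, s ≤ k - 2 →
      F (-((s : ℤ) * (k + 1) - 1)) = (-1) ^ s * X ^ s) := by
  have hrev := apply_one_sub_add_one_add X (by omega) hrec
  have hzero : ∀ j : ℕ, 1 ≤ j → j < k → F (1 - j) = 0 := fun j hj hjk => by
    rw [show (1 : ℤ) - j = -((j - 1 : ℕ) : ℤ) by omega, hF0 (j - 1) (by omega)]
  have hFk : F (1 - k) = 1 := (apply_one_sub_eq_apply_one X (by omega) hrec hF0).trans hF1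
  refine ⟨fun s hs hsk => ?_, fun s hsk => ?_⟩
  · obtain ⟨t, rfl⟩ : ∃ t, s = t + 1 := ⟨s - 1, by omega⟩
    rw [Nat.add_sub_cancel, ← apply_succ_mul hrev hzero hFk (s := t) (by omega)]
    congr 1
    push_cast
    ring
  · rw [← neg_pow, ← apply_mul_add_self (g := fun n : ℕ => F (1 - n)) hrev hzero
      (by simpa using hF1) (by omega : s < k)]
    congr 1
    push_cast
    ring
end

section
/- Let k ≥ 2 and n ≥ 3 be integers. (i) If k is even, then 𝓕_{n,k}(t) ≠ 0 for every real number t ≠ 0; that is, 𝓕_{n,k} has no nonzero real roots. (ii) If k is odd, then 𝓕_{n,k}(t) > 0 for every real number t > 0; that is, 𝓕_{n,k} has no positive real roots. -/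
/-!
For `t > 0` the recurrence expresses `𝓕_{n,k}(t)` as a combination of earlier values with
nonnegative coefficients `t^(k-1-i)`, the one of `𝓕_{n-1,k}(t)` being positive, so induction
from `𝓕_{1,k} = 1` gives `𝓕_{n,k}(t) > 0` for all `n ≥ 1`. For even `k` every term
`x^(k-1-i) 𝓕_{n-1-i,k}` of the recurrence has the same parity, which yields
`𝓕_{n,k}(-t) = (-1)^(n+1) 𝓕_{n,k}(t)` and reduces negative `t` to positive `t`.
-/

open Polynomial Finset

theorem nonneg_of_linear_recurrence {k : ℕ} {c : ℕ → ℝ} (hc : ∀ i, 0 ≤ c i) {u : ℤ → ℝ}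
    (hu : ∀ m, 2 ≤ m → u m = ∑ i ∈ range k, c i * u (m - 1 - i))
    (hu0 : ∀ m, 2 - (k : ℤ) ≤ m → m ≤ 0 → 0 ≤ u m) (hu1 : 0 ≤ u 1) :
    ∀ m, 2 - (k : ℤ) ≤ m → 0 ≤ u m := by
  intro m
  induction m using Int.strongRec (m := 2) with
  | lt m hm =>
    intro hkm
    rcases le_or_gt m 0 with hm0 | hm0
    · exact hu0 m hkm hm0
    · rwa [show m = 1 by omega]
  | ge m hm ih =>
    intro _
    rw [hu m hm]
    refine sum_nonneg fun i hi => mul_nonneg (hc i) (ih _ (by omega) ?_)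
    have := mem_range.mp hi
    omega

theorem pos_of_linear_recurrence {k : ℕ} (hk : 0 < k) {c : ℕ → ℝ} (hc : ∀ i, 0 ≤ c i)
    (hc0 : 0 < c 0) {u : ℤ → ℝ} (hu : ∀ m, 2 ≤ m → u m = ∑ i ∈ range k, c i * u (m - 1 - i))
    (hu0 : ∀ m, 2 - (k : ℤ) ≤ m → m ≤ 0 → 0 ≤ u m) (hu1 : 0 < u 1) :
    ∀ m, 1 ≤ m → 0 < u m := by
  have hnonneg := nonneg_of_linear_recurrence hc hu hu0 hu1.le
  refine Int.leInduction hu1 fun m hm ih => ?_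
  rw [hu (m + 1) (by omega)]
  calc 0 < c 0 * u (m + 1 - 1 - (0 : ℕ)) := mul_pos hc0 (by simpa using ih)
    _ ≤ ∑ i ∈ range k, c i * u (m + 1 - 1 - i) :=
      single_le_sum (fun i hi => mul_nonneg (hc i) (hnonneg (m + 1 - 1 - i)
        (by have := mem_range.mp hi; omega))) (mem_range.mpr hk)

structure IsGenFibonacciPoly (k : ℕ) (F : ℤ → ℤ[X]) : Prop where
  recurrence : ∀ n : ℤ, F n = ∑ i ∈ range k, X ^ (k - 1 - i) * F (n - 1 - (i : ℤ))
  one : F 1 = 1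
  eq_zero : ∀ m : ℕ, m ≤ k - 2 → F (-(m : ℤ)) = 0

namespace IsGenFibonacciPoly

variable {k : ℕ} {F : ℤ → ℤ[X]}

theorem aeval_eq_sum (hF : IsGenFibonacciPoly k F) (t : ℝ) (m : ℤ) :
    aeval t (F m) = ∑ i ∈ range k, t ^ (k - 1 - i) * aeval t (F (m - 1 - i)) := by
  rw [hF.recurrence m]
  simp only [map_sum, map_mul, map_pow, aeval_X]

theorem eq_zero_of_nonpos (hF : IsGenFibonacciPoly k F) {m : ℤ} (hkm : 2 - (k : ℤ) ≤ m)
    (hm : m ≤ 0) : F m = 0 := by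
  have h := hF.eq_zero (-m).toNat (by omega)
  rwa [show -((-m).toNat : ℤ) = m by omega] at h

theorem aeval_pos (hF : IsGenFibonacciPoly k F) (hk : 0 < k) {t : ℝ} (ht : 0 < t) {m : ℤ}
    (hm : 1 ≤ m) : 0 < aeval t (F m) :=
  pos_of_linear_recurrence hk (fun _ => pow_nonneg ht.le _) (pow_pos ht _)
    (fun m _ => hF.aeval_eq_sum t m)
    (fun m hkm hm => by simp [hF.eq_zero_of_nonpos hkm hm]) (by simp [hF.one]) m hm

theorem aeval_neg (hF : IsGenFibonacciPoly k F) (hk : Even k) (t : ℝ) {m : ℤ}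
    (hkm : 2 - (k : ℤ) ≤ m) : aeval (-t) (F m) = (m + 1).negOnePow * aeval t (F m) := by
  induction m using Int.strongRec (m := 2) with
  | lt m hm =>
    rcases le_or_gt m 0 with hm0 | hm0
    · simp [hF.eq_zero_of_nonpos hkm hm0]
    · obtain rfl : m = 1 := by omega
      simp [hF.one]
  | ge m hm ih =>
    rw [hF.aeval_eq_sum, hF.aeval_eq_sum, mul_sum]
    refine sum_congr rfl fun i hi => ?_
    have hi := mem_range.mp hi
    have hsign :
        ((k - 1 - i : ℕ) : ℤ).negOnePow * (m - 1 - i + 1).negOnePow = (m + 1).negOnePow := by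
      rw [← Int.negOnePow_add, Int.negOnePow_eq_iff]
      obtain ⟨j, hj⟩ := hk
      exact ⟨j - 1 - i, by omega⟩
    rw [ih _ (by omega) (by omega), neg_pow, ← Int.cast_negOnePow_natCast, ← hsign]
    push_cast
    ring

end IsGenFibonacciPoly

/-- For `n ≥ 3`: (i) if `k` is even, `F n` has no nonzero real roots;
(ii) if `k` is odd, `F n` has no positive real roots. -/
theorem fib_poly_real_roots (k : ℕ) (hk : 2 ≤ k)
    (F : ℤ → Polynomial ℤ)
    (hrec : ∀ n : ℤ, F n = ∑ i ∈ Finset.range k, X ^ (k - 1 - i) * F (n - 1 - (i : ℤ)))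
    (hF1 : F 1 = 1)
    (hF0 : ∀ m : ℕ, m ≤ k - 2 → F (-(m : ℤ)) = 0)
    (n : ℤ) (hn : 3 ≤ n) :
    (Even k → ∀ t : ℝ, t ≠ 0 → Polynomial.aeval t (F n) ≠ 0) ∧
    (Odd k → ∀ t : ℝ, 0 < t → 0 < Polynomial.aeval t (F n)) := by
  have hF : IsGenFibonacciPoly k F := ⟨hrec, hF1, hF0⟩
  have hpos {t : ℝ} (ht : 0 < t) : 0 < aeval t (F n) := hF.aeval_pos (by omega) ht (by omega)
  refine ⟨fun hk_even t ht => ?_, fun _ _ => hpos⟩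
  rcases ht.lt_or_gt with ht_neg | ht_pos
  · rw [← neg_neg t, hF.aeval_neg hk_even (-t) (by omega)]
    exact mul_ne_zero (by simp) (hpos (neg_pos.mpr ht_neg)).ne'
  · exact (hpos ht_pos).ne'
end
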